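/- arXiv:2306.00428 — 7 statements merged into one kernel-verified Lean document; each statement's English description precedes it below -/
import Mathlib

section
/- Let M be a von Neumann algebra, A ∈ M positive with range projection P ∈ M. For any T ∈ M admitting an A^{1/2}-adjoint in M, the spectrum of PTP in the corner algebra PMP is contained in the A-spectrum of T, where λ ∉ σ_A(T) means there exists S in M admitting an A^{1/2}-adjoint with A(T−λ)S = AS(T−λ) = A. -/
open scoped ComplexOrder

set_option synthInstance.maxHeartbeats 1000000
set_option maxHeartbeats 1000000

noncomputable section

variable {H : Type*} [NormedAddCommGroup H] [InnerProductSpace ℂ H] [CompleteSpace H]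

namespace ASpec

/-- `T` admits an `A^{1/2}`-adjoint in the von Neumann algebra `M`. -/
def HasHalfAdjointIn (M : VonNeumannAlgebra H) (A T : H →L[ℂ] H) : Prop :=
  ∃ L ∈ M, CFC.sqrt A * T = ContinuousLinearMap.adjoint L * CFC.sqrt A

/-- `M^A`: the elements of `M` admitting an `A^{1/2}`-adjoint in `M`. -/
def MA (M : VonNeumannAlgebra H) (A : H →L[ℂ] H) : Set (H →L[ℂ] H) :=
  {T | T ∈ M ∧ HasHalfAdjointIn M A T}

/-- `T` is `A`-invertible in `M^A`. -/
def AInvertible (M : VonNeumannAlgebra H) (A T : H →L[ℂ] H) : Prop :=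
  ∃ S ∈ MA M A, A * T * S = A ∧ A * S * T = A

/-- The `A`-spectrum of `T`. -/
def ASpectrum (M : VonNeumannAlgebra H) (A T : H →L[ℂ] H) : Set ℂ :=
  {lam : ℂ | ¬ AInvertible M A (lam • (1 : H →L[ℂ] H) - T)}

/-- The `A`-spectral radius of `T`. -/
def rA (M : VonNeumannAlgebra H) (A T : H →L[ℂ] H) : ℝ :=
  sSup ((fun z : ℂ => ‖z‖) '' ASpectrum M A T)

/-- The spectrum of `P * T * P` in the corner algebra `P M P` (with unit `P`). -/
def cornerSpectrum (M : VonNeumannAlgebra H) (P T : H →L[ℂ] H) : Set ℂ :=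
  {lam : ℂ | ¬ ∃ S ∈ M, P * S * P = S ∧
      (lam • P - P * T * P) * S = P ∧ S * (lam • P - P * T * P) = P}

/-- `P` is the orthogonal projection onto the closure of the range of `A`. -/
def IsRangeProjection (A P : H →L[ℂ] H) : Prop :=
  IsSelfAdjoint P ∧ P * P = P ∧
    LinearMap.range (P : H →ₗ[ℂ] H) =
      (LinearMap.range (A : H →ₗ[ℂ] H)).topologicalClosure

/-- `A` is well-supported: `σ(A) \ {0}` is closed. -/
def WellSupported (A : H →L[ℂ] H) : Prop := IsClosed (spectrum ℂ A \ {0})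

/-- the `A`-seminorm `‖T‖_A = sup {‖Th‖_A : ‖h‖_A = 1}`. -/
def normA (A T : H →L[ℂ] H) : ℝ :=
  sSup {r : ℝ | ∃ h : H, (inner ℂ (A h) h : ℂ) = 1 ∧
    r = Real.sqrt (Complex.re (inner ℂ (A (T h)) (T h)))}

end ASpec

open ASpec in
theorem stmt4 (M : VonNeumannAlgebra H) (A P T : H →L[ℂ] H) (hA : A.IsPositive)
    (hAM : A ∈ M) (hP : IsRangeProjection A P) (hPM : P ∈ M)
    (hT : T ∈ MA M A) :
    cornerSpectrum M P T ⊆ ASpectrum M A T := by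
  obtain ⟨hPsa, hPP, hPrange⟩ := hP
  obtain ⟨hTM, L, hLM, hL⟩ := hT
  intro lam hlam
  simp only [ASpectrum, Set.mem_setOf_eq]
  intro hinv
  obtain ⟨S, ⟨hSM, K, hKM, hK⟩, h1, h2⟩ := hinv
  apply hlam
  set sA := CFC.sqrt A with hsA
  have hApos : (0 : H →L[ℂ] H) ≤ A := (ContinuousLinearMap.nonneg_iff_isPositive A).mpr hA
  have hsq : sA * sA = A := CFC.sqrt_mul_sqrt_self A hApos
  have hsAsa : IsSelfAdjoint sA := IsSelfAdjoint.of_nonneg (CFC.sqrt_nonneg _)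
  have hAsa : IsSelfAdjoint A := hA.isSelfAdjoint
  have hAsym : ∀ x y : H, (inner ℂ (A x) y : ℂ) = inner ℂ x (A y) := fun x y => hAsa.isSymmetric x y
  have hPsym : ∀ x y : H, (inner ℂ (P x) y : ℂ) = inner ℂ x (P y) := fun x y => hPsa.isSymmetric x y
  have hsAsym : ∀ x y : H, (inner ℂ (sA x) y : ℂ) = inner ℂ x (sA y) :=
    fun x y => hsAsa.isSymmetric x y
  -- pointwise: A x = 0 → P x = 0
  have hAP : ∀ x : H, A x = 0 → P x = 0 := by
    intro x hx
    have key : ∀ y : H, (inner ℂ x (P y) : ℂ) = 0 := by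
      intro y
      have hy : P y ∈ closure (LinearMap.range (A : H →ₗ[ℂ] H) : Set H) := by
        have : P y ∈ (LinearMap.range (A : H →ₗ[ℂ] H)).topologicalClosure := by
          rw [← hPrange]; exact ⟨y, rfl⟩
        exact this
      have hsub : (LinearMap.range (A : H →ₗ[ℂ] H) : Set H) ⊆
          {z : H | (inner ℂ x z : ℂ) = 0} := by
        rintro _ ⟨z, rfl⟩
        simp only [Set.mem_setOf_eq, ContinuousLinearMap.coe_coe]
        rw [← hAsym x z]
        simp [hx]
      have hclosed : IsClosed {z : H | (inner ℂ x z : ℂ) = 0} :=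
        isClosed_eq (continuous_const.inner continuous_id) continuous_const
      exact closure_minimal hsub hclosed hy
    have h0 : (inner ℂ (P x) (P x) : ℂ) = 0 := by
      have := hPsym x (P x)
      rw [this]; exact key (P x)
    exact inner_self_eq_zero.mp h0
  -- pointwise: P x = 0 → sA x = 0
  have hPsA : ∀ x : H, P x = 0 → sA x = 0 := by
    intro x hx
    have hmem : A x ∈ LinearMap.range (P : H →ₗ[ℂ] H) := by
      rw [hPrange]
      exact Submodule.le_topologicalClosure _ ⟨x, rfl⟩
    obtain ⟨y, hy⟩ := hmem
    have h0 : (inner ℂ x (A x) : ℂ) = 0 := by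
      rw [← hy]
      simp only [ContinuousLinearMap.coe_coe]
      rw [← hPsym x y]
      simp [hx]
    have h1 : (inner ℂ (sA x) (sA x) : ℂ) = 0 := by
      have hs := hsAsym x (sA x)
      rw [hs]
      have : sA (sA x) = A x := by
        have := congrArg (fun f : H →L[ℂ] H => f x) hsq
        simpa using this
      rw [this, h0]
    exact inner_self_eq_zero.mp h1
  -- kernel: sA x = 0 → P x = 0
  have hsAP : ∀ x : H, sA x = 0 → P x = 0 := by
    intro x hx
    apply hAP
    have := congrArg (fun f : H →L[ℂ] H => f x) hsq
    rw [← this]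
    simp [ContinuousLinearMap.mul_apply, hx]
  -- operator lemma: A * X = A → P * X = P
  have opAP : ∀ X : H →L[ℂ] H, A * X = A → P * X = P := by
    intro X hX
    ext x
    have hz : A (X x - x) = 0 := by
      have := congrArg (fun f : H →L[ℂ] H => f x) hX
      simp only [ContinuousLinearMap.mul_apply] at this
      rw [map_sub, this, sub_self]
    have hp := hAP _ hz
    rw [map_sub, sub_eq_zero] at hp
    simpa [ContinuousLinearMap.mul_apply] using hp
  -- operator lemma: sA * X = Y * sA → P * X * P = P * X
  have opHalf : ∀ X Y : H →L[ℂ] H, sA * X = Y * sA → P * X * P = P * X := by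
    intro X Y hX
    ext x
    have hxP : P (x - P x) = 0 := by
      have := congrArg (fun f : H →L[ℂ] H => f x) hPP
      simp only [ContinuousLinearMap.mul_apply] at this
      rw [map_sub, this, sub_self]
    have h2 : sA (x - P x) = 0 := hPsA _ hxP
    have h3 : sA (X (x - P x)) = 0 := by
      have := congrArg (fun f : H →L[ℂ] H => f (x - P x)) hX
      simp only [ContinuousLinearMap.mul_apply] at this
      rw [this, h2, map_zero]
    have h4 : A (X (x - P x)) = 0 := by
      have := congrArg (fun f : H →L[ℂ] H => f (X (x - P x))) hsq
      simp only [ContinuousLinearMap.mul_apply] at this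
      rw [← this, h3, map_zero]
    have h5 := hAP _ h4
    rw [map_sub, map_sub, sub_eq_zero] at h5
    simpa [ContinuousLinearMap.mul_apply] using h5.symm
  have hPT : P * T * P = P * T := opHalf T (ContinuousLinearMap.adjoint L) hL
  have hPS : P * S * P = P * S := opHalf S (ContinuousLinearMap.adjoint K) hK
  have hPR : P * (lam • (1 : H →L[ℂ] H) - T) * P = P * (lam • (1 : H →L[ℂ] H) - T) := by
    simp only [mul_sub, sub_mul, mul_one, mul_smul_comm, smul_mul_assoc, hPP, hPT]
  have hRS : P * ((lam • (1 : H →L[ℂ] H) - T) * S) = P := by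
    apply opAP
    rw [← mul_assoc]; exact h1
  have hSR : P * (S * (lam • (1 : H →L[ℂ] H) - T)) = P := by
    apply opAP
    rw [← mul_assoc]; exact h2
  have e1 : lam • P - P * T * P = P * (lam • (1 : H →L[ℂ] H) - T) * P := by
    simp only [mul_sub, sub_mul, mul_one, mul_smul_comm, smul_mul_assoc, hPP, hPT]
  refine ⟨P * S * P, mul_mem (mul_mem hPM hSM) hPM, ?_, ?_, ?_⟩
  · rw [show P * (P * S * P) * P = (P * P) * S * (P * P) by simp only [mul_assoc], hPP]
  · rw [e1, hPR,
      show P * (lam • (1 : H →L[ℂ] H) - T) * (P * S * P)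
          = P * (lam • (1 : H →L[ℂ] H) - T) * P * S * P by simp only [mul_assoc], hPR,
      show P * (lam • (1 : H →L[ℂ] H) - T) * S * P
          = P * ((lam • (1 : H →L[ℂ] H) - T) * S) * P by simp only [mul_assoc], hRS, hPP]
  · rw [e1, hPS,
      show P * S * (P * (lam • (1 : H →L[ℂ] H) - T) * P)
          = P * S * P * (lam • (1 : H →L[ℂ] H) - T) * P by simp only [mul_assoc], hPS,
      show P * S * (lam • (1 : H →L[ℂ] H) - T) * P
          = P * (S * (lam • (1 : H →L[ℂ] H) - T)) * P by simp only [mul_assoc], hSR, hPP]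
end
end

section
/- Let M be a von Neumann algebra and A ∈ M positive and well-supported (σ(A)\{0} is closed), with range projection P. Then for every T ∈ M admitting an A^{1/2}-adjoint, σ_A(T) = σ(PT, PMP), the spectrum of PT = PTP in the corner algebra PMP. -/
open scoped ComplexOrder

set_option synthInstance.maxHeartbeats 1000000
set_option maxHeartbeats 1000000

noncomputable section

variable {H : Type*} [NormedAddCommGroup H] [InnerProductSpace ℂ H] [CompleteSpace H]

namespace ASpecAux

/-! Auxiliary material for `stmt7`. -/

theorem centralizer_isClosed (s : Set (H →L[ℂ] H)) : IsClosed (Set.centralizer s) := by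
  have : Set.centralizer s = ⋂ m ∈ s, {x : H →L[ℂ] H | m * x = x * m} := by
    ext x; simp only [Set.mem_centralizer_iff, Set.mem_iInter, Set.mem_setOf_eq]
  rw [this]
  exact isClosed_biInter fun m _ => isClosed_eq (continuous_mul_left m) (continuous_mul_right m)

theorem vna_isClosed (M : VonNeumannAlgebra H) : IsClosed (M : Set (H →L[ℂ] H)) := by
  rw [← M.centralizer_centralizer]
  exact centralizer_isClosed _

theorem cfcC_mem_M (M : VonNeumannAlgebra H) (A : H →L[ℂ] H) (hAM : A ∈ M) (f : ℂ → ℂ) :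
    cfc f A ∈ M := by
  by_cases h : ContinuousOn f (spectrum ℂ A) ∧ IsStarNormal A
  · obtain ⟨hf, ha⟩ := h
    rw [cfc_apply f A ha hf, cfcHom_eq_of_isStarNormal]
    refine StarAlgebra.elemental.le_of_mem (S := M.toStarSubalgebra) (vna_isClosed M) hAM ?_
    exact Subtype.mem _
  · rcases not_and_or.mp h with h | h
    · rw [cfc_apply_of_not_continuousOn A h]; exact zero_mem M.toStarSubalgebra
    · rw [cfc_apply_of_not_predicate A h]; exact zero_mem M.toStarSubalgebra

theorem cfcR_mem_M (M : VonNeumannAlgebra H) (A : H →L[ℂ] H) (hAM : A ∈ M)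
    (hsa : IsSelfAdjoint A) (f : ℝ → ℝ) : cfc f A ∈ M := by
  rw [cfc_real_eq_complex f hsa]
  exact cfcC_mem_M M A hAM _

def gf (α : ℝ) (t : ℝ) : ℝ := t / (max t α) ^ 2
def ef (α : ℝ) (t : ℝ) : ℝ := t * gf α t

theorem gf_cont {α : ℝ} (hα : 0 < α) : Continuous (gf α) :=
  continuous_id.div ((continuous_id.max continuous_const).pow 2)
    fun x => pow_ne_zero _ (ne_of_gt (lt_of_lt_of_le hα (le_max_right x α)))

theorem ef_cont {α : ℝ} (hα : 0 < α) : Continuous (ef α) := continuous_id.mul (gf_cont hα)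

theorem ef_cases {α t : ℝ} (hα : 0 < α) (h : t = 0 ∨ α ≤ t) :
    (t = 0 ∧ gf α t = 0 ∧ ef α t = 0) ∨ (α ≤ t ∧ ef α t = 1) := by
  rcases h with h | h
  · subst h; left; simp [gf, ef]
  · right
    refine ⟨h, ?_⟩
    have ht : 0 < t := lt_of_lt_of_le hα h
    have hm : max t α = t := max_eq_left h
    simp only [ef, gf, hm]
    field_simp

theorem mulhelp {α : ℝ} (A : H →L[ℂ] H) (hgap : ∀ t ∈ spectrum ℝ A, t = 0 ∨ α ≤ t)
    (f g h : ℝ → ℝ) (hf : Continuous f) (hg : Continuous g)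
    (heq : ∀ t ∈ spectrum ℝ A, f t * g t = h t) :
    cfc f A * cfc g A = cfc h A := by
  rw [← cfc_mul _ _ A hf.continuousOn hg.continuousOn]
  exact cfc_congr heq

section main
variable {α : ℝ} (A : H →L[ℂ] H) (hα : 0 < α) (h0 : (0:H →L[ℂ] H) ≤ A)
  (hgap : ∀ t ∈ spectrum ℝ A, t = 0 ∨ α ≤ t)

include hα h0 hgap

theorem QA : cfc (ef α) A * A = A := by
  have hsa : IsSelfAdjoint A := IsSelfAdjoint.of_nonneg h0
  have h1 : cfc (ef α) A * cfc (fun x : ℝ => x) A = cfc (fun x : ℝ => x) A := by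
    apply mulhelp A hgap _ _ _ (ef_cont hα) continuous_id
    intro t ht
    rcases ef_cases hα (hgap t ht) with ⟨ha1, -, ha3⟩ | ⟨-, ha2⟩
    · simp [ha1, ha3]
    · simp [ha2]
  rwa [cfc_id' ℝ A hsa] at h1

theorem AQ : A * cfc (ef α) A = A := by
  have hsa : IsSelfAdjoint A := IsSelfAdjoint.of_nonneg h0
  have h1 : cfc (fun x : ℝ => x) A * cfc (ef α) A = cfc (fun x : ℝ => x) A := by
    apply mulhelp A hgap _ _ _ continuous_id (ef_cont hα)
    intro t ht
    rcases ef_cases hα (hgap t ht) with ⟨ha1, -, ha3⟩ | ⟨-, ha2⟩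
    · simp [ha1, ha3]
    · simp [ha2]
  rwa [cfc_id' ℝ A hsa] at h1

theorem A'A : cfc (gf α) A * A = cfc (ef α) A := by
  have hsa : IsSelfAdjoint A := IsSelfAdjoint.of_nonneg h0
  have h1 : cfc (gf α) A * cfc (fun x : ℝ => x) A = cfc (ef α) A := by
    apply mulhelp A hgap _ _ _ (gf_cont hα) continuous_id
    intro t ht
    simp [ef, mul_comm]
  rwa [cfc_id' ℝ A hsa] at h1

omit h0 in
theorem QQ : cfc (ef α) A * cfc (ef α) A = cfc (ef α) A := by
  apply mulhelp A hgap _ _ _ (ef_cont hα) (ef_cont hα)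
  intro t ht
  rcases ef_cases hα (hgap t ht) with ⟨-, -, ha3⟩ | ⟨-, ha2⟩
  · simp [ha3]
  · simp [ha2]

omit hα in
theorem sqrt_eq : CFC.sqrt A = cfc Real.sqrt A := by
  have hsa : IsSelfAdjoint A := IsSelfAdjoint.of_nonneg h0
  have hb : (0:H →L[ℂ] H) ≤ cfc Real.sqrt A :=
    cfc_nonneg fun x _ => Real.sqrt_nonneg x
  refine CFC.sqrt_unique ?_ hb
  have h1 : cfc Real.sqrt A * cfc Real.sqrt A = cfc (fun x : ℝ => x) A := by
    apply mulhelp A hgap _ _ _ Real.continuous_sqrt Real.continuous_sqrt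
    intro t ht
    exact Real.mul_self_sqrt (spectrum_nonneg_of_nonneg h0 ht)
  rwa [cfc_id' ℝ A hsa] at h1

omit h0 in
theorem BQ : cfc Real.sqrt A * cfc (ef α) A = cfc Real.sqrt A := by
  apply mulhelp A hgap _ _ _ Real.continuous_sqrt (ef_cont hα)
  intro t ht
  rcases ef_cases hα (hgap t ht) with ⟨ha1, -, ha3⟩ | ⟨-, ha2⟩
  · simp [ha1, ha3]
  · simp [ha2]

theorem B'B : cfc (fun t => Real.sqrt t * gf α t) A * cfc Real.sqrt A = cfc (ef α) A := by
  apply mulhelp A hgap _ _ _ (Real.continuous_sqrt.mul (gf_cont hα)) Real.continuous_sqrt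
  intro t ht
  have h0t : 0 ≤ t := spectrum_nonneg_of_nonneg h0 ht
  simp only [ef, Pi.mul_apply]
  rw [mul_comm (Real.sqrt t) (gf α t), mul_assoc, Real.mul_self_sqrt h0t, mul_comm]

theorem BB' : cfc Real.sqrt A * cfc (fun t => Real.sqrt t * gf α t) A = cfc (ef α) A := by
  apply mulhelp A hgap _ _ _ Real.continuous_sqrt (Real.continuous_sqrt.mul (gf_cont hα))
  intro t ht
  have h0t : 0 ≤ t := spectrum_nonneg_of_nonneg h0 ht
  simp only [ef, Pi.mul_apply]
  rw [← mul_assoc, Real.mul_self_sqrt h0t]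

end main

theorem P_eq_Q (A P Q A' : H →L[ℂ] H)
    (hPsa : IsSelfAdjoint P) (hPP : P * P = P)
    (hPran : LinearMap.range (P : H →ₗ[ℂ] H) =
      (LinearMap.range (A : H →ₗ[ℂ] H)).topologicalClosure)
    (hQsa : IsSelfAdjoint Q) (hQA : Q * A = A) (hAA' : A * A' = Q) : P = Q := by
  have hfix : ∀ x : H, x ∈ LinearMap.range (A : H →ₗ[ℂ] H) ↔ Q x = x := by
    intro x
    constructor
    · rintro ⟨y, rfl⟩
      have := congrFun (congrArg DFunLike.coe hQA) y
      simpa using this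
    · intro hx
      refine ⟨A' x, ?_⟩
      have := congrFun (congrArg DFunLike.coe hAA') x
      simp only [ContinuousLinearMap.mul_apply] at this ⊢
      simp only [ContinuousLinearMap.coe_coe]
      rw [this, hx]
  have hclosed : IsClosed ((LinearMap.range (A : H →ₗ[ℂ] H) : Submodule ℂ H) : Set H) := by
    have : ((LinearMap.range (A : H →ₗ[ℂ] H) : Submodule ℂ H) : Set H) = {x | Q x = x} := by
      ext x; exact hfix x
    rw [this]
    exact isClosed_eq Q.continuous continuous_id
  have htc : (LinearMap.range (A : H →ₗ[ℂ] H)).topologicalClosure =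
      LinearMap.range (A : H →ₗ[ℂ] H) :=
    le_antisymm (Submodule.topologicalClosure_minimal _ le_rfl hclosed)
      (Submodule.le_topologicalClosure _)
  have hran : LinearMap.range (P : H →ₗ[ℂ] H) = LinearMap.range (A : H →ₗ[ℂ] H) :=
    hPran.trans htc
  have hPfix : ∀ x : H, x ∈ LinearMap.range (A : H →ₗ[ℂ] H) → P x = x := by
    intro x hx
    rw [← hran] at hx
    obtain ⟨y, rfl⟩ := hx
    have := congrFun (congrArg DFunLike.coe hPP) y
    simpa using this
  have hPQ : P * Q = Q := by
    ext x
    have h1 : Q x ∈ LinearMap.range (A : H →ₗ[ℂ] H) := by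
      refine ⟨A' x, ?_⟩
      have := congrFun (congrArg DFunLike.coe hAA') x
      simpa using this
    simpa using hPfix _ h1
  have hQP : Q * P = P := by
    ext x
    have h1 : P x ∈ LinearMap.range (A : H →ₗ[ℂ] H) := by
      rw [← hran]; exact ⟨x, rfl⟩
    rw [hfix] at h1
    simpa using h1
  have := congrArg star hPQ
  rw [star_mul, hPsa.star_eq, hQsa.star_eq] at this
  rw [hQP] at this
  exact this

end ASpecAux

open ASpecAux in
open ASpec in
theorem stmt7 (M : VonNeumannAlgebra H) (A P T : H →L[ℂ] H) (hA : A.IsPositive)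
    (hAM : A ∈ M) (hws : WellSupported A)
    (hP : IsRangeProjection A P) (hPM : P ∈ M) (hT : T ∈ MA M A) :
    ASpectrum M A T = cornerSpectrum M P T := by
  have h0 : (0 : H →L[ℂ] H) ≤ A := (ContinuousLinearMap.nonneg_iff_isPositive A).mpr hA
  have hsa : IsSelfAdjoint A := IsSelfAdjoint.of_nonneg h0
  -- extract the spectral gap
  obtain ⟨α, hα, hgap⟩ : ∃ α : ℝ, 0 < α ∧ ∀ t ∈ spectrum ℝ A, t = 0 ∨ α ≤ t := by
    have h0K : (0:ℂ) ∈ (spectrum ℂ A \ {0})ᶜ := by simp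
    obtain ⟨ε, hε, hball⟩ := Metric.isOpen_iff.mp hws.isOpen_compl 0 h0K
    refine ⟨ε, hε, fun t ht => ?_⟩
    by_cases h : t = 0
    · exact Or.inl h
    right
    have h0t : 0 ≤ t := spectrum_nonneg_of_nonneg h0 ht
    have htC : (t:ℂ) ∈ spectrum ℂ A := by
      rw [← hsa.spectrumRestricts.algebraMap_image]
      exact ⟨t, ht, rfl⟩
    have hK : (t:ℂ) ∈ spectrum ℂ A \ {0} := ⟨htC, by simpa using h⟩
    by_contra hlt
    push_neg at hlt
    have : (t:ℂ) ∈ Metric.ball (0:ℂ) ε := by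
      simp only [Metric.mem_ball, Complex.dist_eq, sub_zero, Complex.norm_real, Real.norm_eq_abs]
      rwa [abs_of_nonneg h0t]
    exact (hball this) hK
  -- notation
  set Bc := cfc Real.sqrt A with hBc
  set A'c := cfc (gf α) A with hA'c
  set B'c := cfc (fun t => Real.sqrt t * gf α t) A with hB'c
  have hPQc : P = cfc (ef α) A :=
    P_eq_Q A P (cfc (ef α) A) A'c hP.1 hP.2.1 hP.2.2 (cfc_predicate _ A)
      (QA A hα h0 hgap) (by
        have h1 : A * A'c = cfc (ef α) A := by
          have hsa' : IsSelfAdjoint A := hsa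
          have h2 : cfc (fun x : ℝ => x) A * cfc (gf α) A = cfc (ef α) A := by
            apply mulhelp A hgap _ _ _ continuous_id (gf_cont hα)
            intro t ht
            simp [ef]
          rwa [cfc_id' ℝ A hsa'] at h2
        exact h1)
  -- key identities
  have hPP : P * P = P := hP.2.1
  have hPA : P * A = A := by rw [hPQc]; exact QA A hα h0 hgap
  have hAP : A * P = A := by rw [hPQc]; exact AQ A hα h0 hgap
  have hA'A : A'c * A = P := by rw [hPQc]; exact A'A A hα h0 hgap
  have hBP : Bc * P = Bc := by rw [hPQc]; exact BQ A hα hgap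
  have hB'cB : B'c * Bc = P := by rw [hPQc]; exact B'B A hα h0 hgap
  have hBB'c : Bc * B'c = P := by rw [hPQc]; exact BB' A hα h0 hgap
  have hsqrt : CFC.sqrt A = Bc := sqrt_eq A h0 hgap
  -- memberships
  have hBM : Bc ∈ M := cfcR_mem_M M A hAM hsa _
  have hA'M : A'c ∈ M := cfcR_mem_M M A hAM hsa _
  have hB'M : B'c ∈ M := cfcR_mem_M M A hAM hsa _
  -- structural lemma: P * T' = P * T' * P for T' with a half adjoint
  have hhalf : ∀ T' : H →L[ℂ] H, HasHalfAdjointIn M A T' → P * T' = P * T' * P := by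
    intro T' hT'
    obtain ⟨L, hLM, hrel⟩ := hT'
    rw [hsqrt] at hrel
    have e1 : P * T' = B'c * (ContinuousLinearMap.adjoint L * Bc) := by
      rw [← hB'cB, mul_assoc, hrel]
    have e2 : P * T' * P = B'c * (ContinuousLinearMap.adjoint L * Bc) := by
      rw [e1, mul_assoc B'c (ContinuousLinearMap.adjoint L * Bc) P,
        mul_assoc (ContinuousLinearMap.adjoint L) Bc P, hBP]
    exact e1.trans e2.symm
  -- the main equivalence
  ext lam
  simp only [ASpectrum, cornerSpectrum, Set.mem_setOf_eq]
  apply not_congr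
  set R := lam • (1 : H →L[ℂ] H) - T with hR
  -- R has a half adjoint
  have hRhalf : HasHalfAdjointIn M A R := by
    obtain ⟨L0, hL0M, hrel0⟩ := hT.2
    refine ⟨star lam • 1 - L0, ?_, ?_⟩
    · refine sub_mem ?_ hL0M
      simpa using M.toStarSubalgebra.smul_mem (one_mem M.toStarSubalgebra) (star lam)
    · rw [← ContinuousLinearMap.star_eq_adjoint] at hrel0 ⊢
      rw [star_sub, star_smul, star_star, star_one]
      rw [hR]
      rw [mul_sub, sub_mul, mul_smul_comm, smul_mul_assoc, mul_one, one_mul, hrel0]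
  have hRM : R ∈ M := by
    refine sub_mem ?_ hT.1
    simpa using M.toStarSubalgebra.smul_mem (one_mem M.toStarSubalgebra) lam
  have hPR : P * R = P * R * P := hhalf R hRhalf
  have hPRP : P * R * P = lam • P - P * T * P := by
    rw [hR]
    rw [mul_sub, sub_mul, mul_smul_comm, smul_mul_assoc, mul_one, hPP]
  constructor
  · -- A-invertible → corner invertible
    rintro ⟨S, ⟨hSM, hShalf⟩, h1, h2⟩
    have hPS : P * S = P * S * P := hhalf S hShalf
    have hPRS : P * R * S = P := by
      have h1' : A'c * (A * R * S) = A'c * A := by rw [h1]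
      simp only [← mul_assoc] at h1'
      rwa [hA'A] at h1'
    have hPSR : P * S * R = P := by
      have h2' : A'c * (A * S * R) = A'c * A := by rw [h2]
      simp only [← mul_assoc] at h2'
      rwa [hA'A] at h2'
    refine ⟨P * S * P, mul_mem (mul_mem hPM hSM) hPM, ?_, ?_, ?_⟩
    · have : P * (P * S * P) * P = (P * P) * S * (P * P) := by simp only [mul_assoc]
      rw [this, hPP]
    · rw [← hPRP, ← hPS, ← hPR, ← mul_assoc, ← hPR]
      exact hPRS
    · rw [← hPRP, ← hPS, ← hPR, ← mul_assoc, ← hPS]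
      exact hPSR
  · -- corner invertible → A-invertible
    rintro ⟨S, hSM, hSc, hc1, hc2⟩
    have hPS : P * S = S := by
      conv_lhs => rw [show S = P * S * P from hSc.symm]
      simp only [← mul_assoc]
      rw [hPP]
      exact hSc
    have hSP : S * P = S := by
      conv_lhs => rw [show S = P * S * P from hSc.symm]
      simp only [mul_assoc]
      rw [hPP]
      simp only [← mul_assoc]
      exact hSc
    have hShalf : HasHalfAdjointIn M A S := by
      refine ⟨ContinuousLinearMap.adjoint (Bc * S * B'c), ?_, ?_⟩
      · rw [← ContinuousLinearMap.star_eq_adjoint]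
        exact star_mem (mul_mem (mul_mem hBM hSM) hB'M)
      · rw [hsqrt, ContinuousLinearMap.adjoint_adjoint]
        rw [mul_assoc (Bc * S) B'c Bc, hB'cB, mul_assoc Bc S P, hSP]
    refine ⟨S, ⟨hSM, hShalf⟩, ?_, ?_⟩
    · -- A * R * S = A
      have step : (P * R * P) * S = P := by rw [hPRP]; exact hc1
      calc A * R * S = (A * P) * R * S := by rw [hAP]
        _ = A * (P * R) * S := by rw [mul_assoc A P R]
        _ = A * (P * R * P) * S := by rw [← hPR]
        _ = A * ((P * R * P) * S) := by rw [mul_assoc]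
        _ = A * P := by rw [step]
        _ = A := hAP
    · -- A * S * R = A
      have step : S * (P * R * P) = P := by rw [hPRP]; exact hc2
      have hSR : S * R = P := by
        conv_lhs => rw [show S = S * P from hSP.symm]
        rw [mul_assoc, hPR]
        exact step
      calc A * S * R = A * (S * R) := by rw [mul_assoc]
        _ = A * P := by rw [hSR]
        _ = A := hAP
end
end

section
/- Let M be a commutative von Neumann algebra and A ∈ M positive and well-supported. Then every T ∈ M admits an A^{1/2}-adjoint (so M^A = M), and σ_A(T) = {φ(T) : φ a character of M with φ(A) ≠ 0} ⊆ σ(T). -/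
open scoped ComplexOrder

set_option synthInstance.maxHeartbeats 1000000
set_option maxHeartbeats 1000000

noncomputable section

variable {H : Type*} [NormedAddCommGroup H] [InnerProductSpace ℂ H] [CompleteSpace H]

section Aux

lemma aux_isClosed_centralizer (s : Set (H →L[ℂ] H)) : IsClosed (Set.centralizer s) := by
  have h : Set.centralizer s = ⋂ m ∈ s, {x : H →L[ℂ] H | m * x = x * m} := by
    ext x; simp [Set.mem_centralizer_iff]
  rw [h]
  exact isClosed_biInter fun m _ => isClosed_eq (continuous_const.mul continuous_id)
    (continuous_id.mul continuous_const)

lemma aux_vn_isClosed (M : VonNeumannAlgebra H) : IsClosed (M : Set (H →L[ℂ] H)) := by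
  rw [← M.centralizer_centralizer]
  exact aux_isClosed_centralizer _

lemma aux_cfc_mem_vn (M : VonNeumannAlgebra H) {A : H →L[ℂ] H} (hA : IsSelfAdjoint A)
    (hAM : A ∈ M) (f : ℝ → ℝ) : cfc f A ∈ M := by
  by_cases hf : ContinuousOn f (spectrum ℝ A)
  · rw [cfc_apply f A hA hf]
    set φ : C(spectrum ℝ A, ℝ) →⋆ₐ[ℝ] (H →L[ℂ] H) := cfcHom hA
    suffices h : ∀ g : C(spectrum ℝ A, ℝ), φ g ∈ M from h _
    intro g
    let S : Subalgebra ℝ C(spectrum ℝ A, ℝ) :=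
      (Subalgebra.restrictScalars ℝ M.toStarSubalgebra.toSubalgebra).comap φ.toAlgHom
    have hSclosed : IsClosed (S : Set C(spectrum ℝ A, ℝ)) :=
      (aux_vn_isClosed M).preimage (cfcHom_continuous hA)
    have hX : (Polynomial.toContinuousMapOnAlgHom (spectrum ℝ A)) Polynomial.X ∈ S := by
      have hid : (Polynomial.toContinuousMapOnAlgHom (spectrum ℝ A)) Polynomial.X
          = (ContinuousMap.id ℝ).restrict (spectrum ℝ A) := by
        ext x; simp
      show φ _ ∈ M
      rw [hid, cfcHom_id hA]
      exact hAM
    have hle : polynomialFunctions (spectrum ℝ A) ≤ S := by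
      rw [polynomialFunctions.eq_adjoin_X]
      exact Algebra.adjoin_le (Set.singleton_subset_iff.mpr hX)
    have htop : (⊤ : Subalgebra ℝ C(spectrum ℝ A, ℝ)) ≤ S := by
      rw [← polynomialFunctions.topologicalClosure (spectrum ℝ A)]
      exact Subalgebra.topologicalClosure_minimal hle hSclosed
    exact htop (by trivial)
  · rw [cfc_apply_of_not_continuousOn A hf]
    exact zero_mem M.toStarSubalgebra

lemma aux_gap {A : H →L[ℂ] H} (hA : A.IsPositive)
    (hws : IsClosed (spectrum ℂ A \ {0})) :
    ∃ ε : ℝ, 0 < ε ∧ ∀ x ∈ spectrum ℝ A, x = 0 ∨ ε ≤ x := by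
  have hA0 : (0 : H →L[ℂ] H) ≤ A := (ContinuousLinearMap.nonneg_iff_isPositive A).mpr hA
  have hnn : ∀ x ∈ spectrum ℝ A, 0 ≤ x := fun x hx => spectrum_nonneg_of_nonneg hA0 hx
  set K : Set ℝ := spectrum ℝ A \ {0} with hK
  have hKclosed : IsClosed K := by
    have h1 : K = (fun x : ℝ => (x : ℂ)) ⁻¹' (spectrum ℂ A \ {0}) := by
      ext x
      simp only [Set.mem_diff, Set.mem_singleton_iff, Set.mem_preimage, hK]
      constructor
      · rintro ⟨hx, hx0⟩
        exact ⟨spectrum.algebraMap_mem ℂ hx, by exact_mod_cast hx0⟩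
      · rintro ⟨hx, hx0⟩
        exact ⟨spectrum.of_algebraMap_mem ℂ hx, by exact_mod_cast hx0⟩
    rw [h1]
    exact hws.preimage Complex.continuous_ofReal
  by_cases hne : K.Nonempty
  · have hbdd : BddBelow K := ⟨0, fun x hx => hnn x hx.1⟩
    have hmem : sInf K ∈ K := hKclosed.csInf_mem hne hbdd
    refine ⟨sInf K, ?_, ?_⟩
    · rcases lt_or_eq_of_le (hnn _ hmem.1) with h | h
      · exact h
      · exact absurd h.symm hmem.2
    · intro x hx
      by_cases hx0 : x = 0
      · exact Or.inl hx0
      · exact Or.inr (csInf_le hbdd ⟨hx, hx0⟩)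
  · exact ⟨1, one_pos, fun x hx => by
      by_contra h
      push_neg at h
      exact hne ⟨x, hx, h.1⟩⟩

lemma aux_regular (M : VonNeumannAlgebra H) {A : H →L[ℂ] H} (hA : IsSelfAdjoint A)
    (hAM : A ∈ M) {ε : ℝ} (hε : 0 < ε)
    (hgap : ∀ x ∈ spectrum ℝ A, x = 0 ∨ ε ≤ x) :
    ∃ B ∈ M, A * B * A = A := by
  set g : ℝ → ℝ := fun x => (min 1 (max 0 ((2/ε) * x - 1))) * (max x ε)⁻¹ with hgdef
  have hg : Continuous g := by
    apply Continuous.mul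
    · fun_prop
    · exact Continuous.inv₀ (continuous_id.max continuous_const)
        (fun x => (lt_of_lt_of_le hε (le_max_right x ε)).ne')
  have hgeq : (spectrum ℝ A).EqOn (fun x => x * g x * x) id := by
    intro x hx
    rcases hgap x hx with h | h
    · simp [hgdef, h]
    · have hx0 : 0 < x := lt_of_lt_of_le hε h
      have hmax : max x ε = x := max_eq_left h
      have h2 : (1 : ℝ) ≤ (2/ε) * x - 1 := by
        have := mul_le_mul_of_nonneg_left h (le_of_lt (div_pos two_pos hε))
        rw [div_mul_cancel₀ (2:ℝ) hε.ne'] at this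
        linarith
      have hgx : g x = x⁻¹ := by
        rw [hgdef]
        simp only [hmax]
        rw [max_eq_right (le_trans zero_le_one h2), min_eq_left h2, one_mul]
      simp only [id, hgx]
      field_simp
  refine ⟨cfc g A, aux_cfc_mem_vn M hA hAM g, ?_⟩
  calc A * cfc g A * A
      = cfc (fun x : ℝ => x) A * cfc g A * cfc (fun x : ℝ => x) A := by rw [cfc_id' ℝ A]
    _ = cfc (fun x : ℝ => x * g x) A * cfc (fun x : ℝ => x) A := by
        rw [← cfc_mul (fun x : ℝ => x) g A (continuousOn_id' _) hg.continuousOn]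
    _ = cfc (fun x : ℝ => x * g x * x) A := by
        rw [← cfc_mul (fun x : ℝ => x * g x) (fun x : ℝ => x) A
          ((continuous_id.mul hg).continuousOn) (continuousOn_id' _)]
    _ = cfc (id : ℝ → ℝ) A := cfc_congr hgeq
    _ = A := cfc_id ℝ A

end Aux

open ASpec in
theorem stmt8 (M : VonNeumannAlgebra H) (A : H →L[ℂ] H) (hA : A.IsPositive) (hAM : A ∈ M)
    (hcomm : ∀ X ∈ M, ∀ Y ∈ M, X * Y = Y * X) (hws : WellSupported A) :
    (∀ T ∈ M, HasHalfAdjointIn M A T) ∧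
    ∀ T (hT : T ∈ M),
      ASpectrum M A T =
        {z : ℂ | ∃ φ : M.toStarSubalgebra →ₐ[ℂ] ℂ, φ ⟨A, hAM⟩ ≠ 0 ∧ φ ⟨T, hT⟩ = z} ∧
      ASpectrum M A T ⊆ spectrum ℂ T := by
  classical
  have hAsa : IsSelfAdjoint A := hA.isSelfAdjoint
  have hA0 : (0 : H →L[ℂ] H) ≤ A := (ContinuousLinearMap.nonneg_iff_isPositive A).mpr hA
  have hsqrt_mem : CFC.sqrt A ∈ M := by
    have h1 : CFC.sqrt A = cfc (fun x : ℝ => (NNReal.sqrt x.toNNReal : ℝ)) A := by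
      rw [CFC.sqrt_eq_cfc (a := A), cfc_nnreal_eq_real NNReal.sqrt A hA0]
    rw [h1]
    exact aux_cfc_mem_vn M hAsa hAM _
  have part1 : ∀ T ∈ M, HasHalfAdjointIn M A T := by
    intro T hT
    refine ⟨star T, star_mem hT, ?_⟩
    have hadj : ContinuousLinearMap.adjoint (star T) = T := by
      rw [← ContinuousLinearMap.star_eq_adjoint, star_star]
    rw [hadj]
    exact hcomm _ hsqrt_mem _ hT
  obtain ⟨ε, hε, hgap⟩ := aux_gap hA hws
  obtain ⟨B, hBM, hABA⟩ := aux_regular M hAsa hAM hε hgap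
  refine ⟨part1, fun T hT => ?_⟩
  set N := M.toStarSubalgebra with hN
  have hNclosed : IsClosed (N : Set (H →L[ℂ] H)) := aux_vn_isClosed M
  haveI : CompleteSpace N := hNclosed.completeSpace_coe
  letI : NormedCommRing N :=
    { (inferInstance : NormedRing N) with
      mul_comm := fun x y => Subtype.ext (hcomm x x.2 y y.2) }
  set a : N := ⟨A, hAM⟩ with ha
  set b : N := ⟨B, hBM⟩ with hb
  set t : N := ⟨T, hT⟩ with ht
  have hab : a * b * a = a := Subtype.ext hABA
  have main : ∀ z : ℂ, z ∈ ASpectrum M A T ↔ ∃ φ : N →ₐ[ℂ] ℂ, φ a ≠ 0 ∧ φ t = z := by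
    intro z
    constructor
    · intro hz
      by_contra hno
      push_neg at hno
      apply hz
      set x : N := z • 1 - t with hx
      set p : N := a * b with hp
      set y : N := x * p + (1 - p) with hy
      have hpp : p * p = p := by
        calc p * p = (a * b * a) * b := by rw [hp]; ring
          _ = a * b := by rw [hab]
          _ = p := hp.symm
      have hap : a * p = a := by
        calc a * p = a * b * a := by rw [hp]; ring
          _ = a := hab
      have hyunit : IsUnit y := by
        by_contra hyu
        obtain ⟨f, hf⟩ := WeakDual.CharacterSpace.exists_apply_eq_zero hyu
        have hfp : f p = 1 ∨ f p = 0 := by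
          have h := map_mul f p p
          rw [hpp] at h
          by_cases h1 : f p = 0
          · exact Or.inr h1
          · left
            field_simp at h
            exact h.symm
        have hfy : f y = (z - f t) * f p + (1 - f p) := by
          rw [hy]
          simp only [map_add, map_mul, map_sub, map_one, hx, map_smul, smul_eq_mul, mul_one]
        rcases hfp with h1 | h1
        · -- f p = 1 : character doesn't kill a, and f t = z
          have hfa : f a ≠ 0 := by
            intro h0
            rw [hp, map_mul, h0, zero_mul] at h1
            exact zero_ne_one h1
          have hft : f t = z := by
            rw [hfy, h1] at hf
            simp at hf
            linear_combination -hf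
          exact hno (WeakDual.CharacterSpace.equivAlgHom f) hfa hft
        · rw [hfy, h1] at hf
          simp at hf
      obtain ⟨u, hu⟩ := hyunit
      have hay : a * y = a * x := by
        have h1 : a * y = (a * p) * x + a - a * p := by rw [hy]; ring
        rw [h1, hap]; ring
      have h1 : a * x * ↑u⁻¹ = a := by
        calc a * x * ↑u⁻¹ = a * y * ↑u⁻¹ := by rw [hay]
          _ = a * (y * ↑u⁻¹) := by ring
          _ = a * (↑u * ↑u⁻¹) := by rw [hu]
          _ = a := by rw [Units.mul_inv, mul_one]
      have h2 : a * ↑u⁻¹ * x = a := by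
        calc a * ↑u⁻¹ * x = a * x * ↑u⁻¹ := by ring
          _ = a := h1
      refine ⟨((u⁻¹ : Nˣ) : N), ⟨((u⁻¹ : Nˣ) : N).2, part1 _ ((u⁻¹ : Nˣ) : N).2⟩, ?_, ?_⟩
      · exact congrArg Subtype.val h1
      · exact congrArg Subtype.val h2
    · rintro ⟨φ, hφa, hφt⟩
      rintro ⟨S, ⟨hSM, _⟩, hS1, _⟩
      set s : N := ⟨S, hSM⟩ with hs
      have heq : a * (z • 1 - t) * s = a := Subtype.ext hS1
      have := congrArg φ heq
      simp only [map_mul, map_sub, map_smul, map_one, hφt, smul_eq_mul, mul_one,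
        sub_self, zero_mul, mul_zero] at this
      exact hφa this.symm
  constructor
  · ext z
    exact main z
  · intro z hz
    obtain ⟨φ, hφa, hφt⟩ := (main z).mp hz
    have h1 : z ∈ spectrum ℂ t := hφt ▸ AlgHom.apply_mem_spectrum φ t
    have h2 := StarSubalgebra.spectrum_eq (hS := hNclosed) (a := t)
    rw [h2] at h1
    exact h1
end
end

section
/- Let M be a von Neumann algebra and A ∈ M positive and well-supported. For any nonzero S, T ∈ M admitting A^{1/2}-adjoints, σ_A(ST)\{0} = σ_A(TS)\{0}; in particular r_A(ST) = r_A(TS), where r_A denotes the A-spectral radius. -/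
open scoped ComplexOrder

set_option synthInstance.maxHeartbeats 1000000
set_option maxHeartbeats 1000000

noncomputable section

variable {H : Type*} [NormedAddCommGroup H] [InnerProductSpace ℂ H] [CompleteSpace H]

open ASpec

private lemma selfAdjoint_mul_cancel {B W : H →L[ℂ] H} (hB : IsSelfAdjoint B)
    (h : B * B * W = B * B) : B * W = B := by
  have h0 : B * (B * (W - 1)) = 0 := by
    rw [← mul_assoc, mul_sub, h]; simp [mul_sub]
  have key : B * (W - 1) = 0 := by
    ext x
    have h1 : (inner ℂ ((B * (W - 1)) x) ((B * (W - 1)) x) : ℂ) = 0 := by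
      have h2 : ContinuousLinearMap.adjoint B = B := hB.adjoint_eq
      calc (inner ℂ ((B * (W - 1)) x) ((B * (W - 1)) x) : ℂ)
          = inner ℂ ((W - 1) x) ((ContinuousLinearMap.adjoint B) ((B * (W - 1)) x)) := by
            rw [ContinuousLinearMap.adjoint_inner_right]; rfl
        _ = inner ℂ ((W - 1) x) ((B * (B * (W - 1))) x) := by rw [h2]; rfl
        _ = 0 := by rw [h0]; simp
    simpa using inner_self_eq_zero.mp h1
  rw [mul_sub, mul_one] at key
  exact sub_eq_zero.mp key

private lemma sqrt_cancel {A : H →L[ℂ] H} (hA : A.IsPositive) {W : H →L[ℂ] H}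
    (h : A * W = A) : CFC.sqrt A * W = CFC.sqrt A := by
  have hBB : CFC.sqrt A * CFC.sqrt A = A :=
    CFC.sqrt_mul_sqrt_self A ((ContinuousLinearMap.nonneg_iff_isPositive A).mpr hA)
  exact selfAdjoint_mul_cancel (IsSelfAdjoint.of_nonneg (CFC.sqrt_nonneg A)) (by rw [hBB, h])

private lemma MA_one (M : VonNeumannAlgebra H) (A : H →L[ℂ] H) : (1 : H →L[ℂ] H) ∈ MA M A :=
  ⟨one_mem M, 1, one_mem M, by simp [← ContinuousLinearMap.star_eq_adjoint]⟩

private lemma MA_mul (M : VonNeumannAlgebra H) (A : H →L[ℂ] H) {X Y : H →L[ℂ] H}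
    (hX : X ∈ MA M A) (hY : Y ∈ MA M A) : X * Y ∈ MA M A := by
  obtain ⟨hXM, LX, hLXM, hLX⟩ := hX
  obtain ⟨hYM, LY, hLYM, hLY⟩ := hY
  refine ⟨mul_mem hXM hYM, LY * LX, mul_mem hLYM hLXM, ?_⟩
  simp only [← ContinuousLinearMap.star_eq_adjoint] at *
  rw [star_mul, ← mul_assoc, hLX, mul_assoc, hLY, mul_assoc]

private lemma MA_add (M : VonNeumannAlgebra H) (A : H →L[ℂ] H) {X Y : H →L[ℂ] H}
    (hX : X ∈ MA M A) (hY : Y ∈ MA M A) : X + Y ∈ MA M A := by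
  obtain ⟨hXM, LX, hLXM, hLX⟩ := hX
  obtain ⟨hYM, LY, hLYM, hLY⟩ := hY
  refine ⟨add_mem hXM hYM, LX + LY, add_mem hLXM hLYM, ?_⟩
  simp only [← ContinuousLinearMap.star_eq_adjoint] at *
  rw [star_add, mul_add, add_mul, hLX, hLY]

private lemma MA_smul (M : VonNeumannAlgebra H) (A : H →L[ℂ] H) (c : ℂ) {X : H →L[ℂ] H}
    (hX : X ∈ MA M A) : c • X ∈ MA M A := by
  obtain ⟨hXM, LX, hLXM, hLX⟩ := hX
  refine ⟨M.toStarSubalgebra.smul_mem hXM c, (starRingEnd ℂ c) • LX,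
    M.toStarSubalgebra.smul_mem hLXM _, ?_⟩
  simp only [← ContinuousLinearMap.star_eq_adjoint] at *
  rw [star_smul, mul_smul_comm, hLX, smul_mul_assoc]
  congr 1
  simp

private lemma transfer (M : VonNeumannAlgebra H) (A S T : H →L[ℂ] H) (hA : A.IsPositive)
    (hS : S ∈ MA M A) (hT : T ∈ MA M A) {lam : ℂ} (hlam : lam ≠ 0)
    (h : AInvertible M A (lam • (1 : H →L[ℂ] H) - S * T)) :
    AInvertible M A (lam • (1 : H →L[ℂ] H) - T * S) := by
  obtain ⟨R, hR, h1, h2⟩ := h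
  have hBB : CFC.sqrt A * CFC.sqrt A = A :=
    CFC.sqrt_mul_sqrt_self A ((ContinuousLinearMap.nonneg_iff_isPositive A).mpr hA)
  obtain ⟨LT, hLTM, hLT⟩ := hT.2
  set B := CFC.sqrt A with hBdef
  set X := lam • (1 : H →L[ℂ] H) - S * T with hXdef
  have hXR : B * (X * R) = B := sqrt_cancel hA (by rw [← mul_assoc]; exact h1)
  have hRX : B * (R * X) = B := sqrt_cancel hA (by rw [← mul_assoc]; exact h2)
  have hAT : A * T = B * ContinuousLinearMap.adjoint LT * B := by
    rw [← hBB, mul_assoc, hLT, ← mul_assoc]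
  have e1 : A * T * (X * R) * S = A * T * S := by
    rw [hAT, mul_assoc (B * ContinuousLinearMap.adjoint LT) B (X * R), hXR]
  have e2 : A * T * (R * X) * S = A * T * S := by
    rw [hAT, mul_assoc (B * ContinuousLinearMap.adjoint LT) B (R * X), hRX]
  refine ⟨lam⁻¹ • (1 + T * R * S), ?_, ?_, ?_⟩
  · exact MA_smul M A _ (MA_add M A (MA_one M A) (MA_mul M A (MA_mul M A hT hR) hS))
  · rw [mul_smul_comm, inv_smul_eq_iff₀ hlam]
    have expand : A * (lam • (1 : H →L[ℂ] H) - T * S) * (1 + T * R * S)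
        = lam • A - A * T * S + A * T * (X * R) * S := by
      rw [hXdef]; noncomm_ring
    rw [expand, e1]; abel
  · rw [mul_smul_comm, smul_mul_assoc, inv_smul_eq_iff₀ hlam]
    have expand : A * (1 + T * R * S) * (lam • (1 : H →L[ℂ] H) - T * S)
        = lam • A - A * T * S + A * T * (R * X) * S := by
      rw [hXdef]; noncomm_ring; module
    rw [expand, e2]; abel

private lemma real_sSup_le_aux {u v : Set ℝ} (hv : ∀ x ∈ v, 0 ≤ x)
    (h : u \ {0} = v \ {0}) : sSup u ≤ sSup v := by
  by_cases hbv : BddAbove v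
  · refine Real.sSup_le (fun x hx => ?_) (Real.sSup_nonneg hv)
    by_cases hx0 : x = 0
    · rw [hx0]; exact Real.sSup_nonneg hv
    · have hxv : x ∈ v \ {0} := by rw [← h]; exact ⟨hx, hx0⟩
      exact le_csSup hbv hxv.1
  · have hbu : ¬ BddAbove u := by
      intro hbu
      have hsub : v ⊆ insert 0 u := by
        intro x hx
        by_cases hx0 : x = 0
        · exact Or.inl hx0
        · have hxu : x ∈ u \ {0} := by rw [h]; exact ⟨hx, hx0⟩
          exact Or.inr hxu.1
      exact hbv ((hbu.insert 0).mono hsub)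
    rw [Real.sSup_of_not_bddAbove hbu, Real.sSup_of_not_bddAbove hbv]

open ASpec in
theorem stmt10 (M : VonNeumannAlgebra H) (A S T : H →L[ℂ] H) (hA : A.IsPositive)
    (hAM : A ∈ M) (hws : WellSupported A)
    (hS : S ∈ MA M A) (hT : T ∈ MA M A) (hS0 : S ≠ 0) (hT0 : T ≠ 0) :
    ASpectrum M A (S * T) \ {0} = ASpectrum M A (T * S) \ {0} ∧
    rA M A (S * T) = rA M A (T * S) := by
  have key : ∀ lam : ℂ, lam ≠ 0 →
      (lam ∈ ASpectrum M A (S * T) ↔ lam ∈ ASpectrum M A (T * S)) := by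
    intro lam hlam
    simp only [ASpectrum, Set.mem_setOf_eq]
    constructor
    · intro hn hinv
      exact hn (transfer M A T S hA hT hS hlam hinv)
    · intro hn hinv
      exact hn (transfer M A S T hA hS hT hlam hinv)
  have hdiff : ASpectrum M A (S * T) \ {0} = ASpectrum M A (T * S) \ {0} := by
    ext lam
    simp only [Set.mem_diff, Set.mem_singleton_iff]
    exact and_congr_left fun h0 => key lam h0
  refine ⟨hdiff, ?_⟩
  have him : (fun z : ℂ => ‖z‖) '' ASpectrum M A (S * T) \ {0}
      = (fun z : ℂ => ‖z‖) '' ASpectrum M A (T * S) \ {0} := by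
    ext r
    simp only [Set.mem_diff, Set.mem_image, Set.mem_singleton_iff]
    constructor
    · rintro ⟨⟨lam, hlam, rfl⟩, hr0⟩
      have hl0 : lam ≠ 0 := fun h => hr0 (by simp [h])
      exact ⟨⟨lam, (key lam hl0).mp hlam, rfl⟩, hr0⟩
    · rintro ⟨⟨lam, hlam, rfl⟩, hr0⟩
      have hl0 : lam ≠ 0 := fun h => hr0 (by simp [h])
      exact ⟨⟨lam, (key lam hl0).mpr hlam, rfl⟩, hr0⟩
  have habs : ∀ (s : Set ℂ), ∀ x ∈ (fun z : ℂ => ‖z‖) '' s, (0:ℝ) ≤ x := by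
    rintro s x ⟨lam, _, rfl⟩
    exact norm_nonneg lam
  unfold rA
  exact le_antisymm
    (real_sSup_le_aux (habs _) him)
    (real_sSup_le_aux (habs _) him.symm)
end
end

section
/- Let M be a von Neumann algebra, A ∈ M positive and well-supported, and S, T ∈ M^A with AST = ATS = 0. Then σ_A(S + T)\{0} = (σ_A(S) ∪ σ_A(T))\{0}. -/
open scoped ComplexOrder

set_option synthInstance.maxHeartbeats 1000000
set_option maxHeartbeats 1000000

noncomputable section

variable {H : Type*} [NormedAddCommGroup H] [InnerProductSpace ℂ H] [CompleteSpace H]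

namespace ASpec

section Aux

variable {M : VonNeumannAlgebra H} {A : H →L[ℂ] H}

variable {M : VonNeumannAlgebra H} {A : H →L[ℂ] H}

lemma sqrt_cancel (hA : A.IsPositive) {V : H →L[ℂ] H} (h : A * V = 0) :
    CFC.sqrt A * V = 0 := by
  have hA' : (0:H→L[ℂ]H) ≤ A := (ContinuousLinearMap.nonneg_iff_isPositive A).2 hA
  set B := CFC.sqrt A with hB
  have hBB : B * B = A := CFC.sqrt_mul_sqrt_self A hA'
  have hBsa : IsSelfAdjoint B := IsSelfAdjoint.of_nonneg (CFC.sqrt_nonneg (a := A))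
  have hzero : ∀ x : H, (B * V) x = 0 := by
    intro x
    have h1 : (B * (B * V)) x = 0 := by rw [← mul_assoc, hBB, h]; rfl
    have : (inner ℂ ((B*V) x) ((B*V) x) : ℂ) = 0 := by
      calc (inner ℂ ((B*V) x) ((B*V) x) : ℂ) = inner ℂ (B ((V x))) ((B*V) x) := rfl
      _ = inner ℂ (V x) (B ((B*V) x)) := by
          rw [← ContinuousLinearMap.adjoint_inner_right B (V x) ((B*V) x), hBsa.adjoint_eq]
      _ = 0 := by
          have h2 : B ((B*V) x) = 0 := h1
          rw [h2, inner_zero_right]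
    simpa using inner_self_eq_zero.mp this
  ext x; simpa using hzero x

lemma key (hA : A.IsPositive) {W : H →L[ℂ] H} (hW : HasHalfAdjointIn M A W)
    {V₁ V₂ : H →L[ℂ] H} (h : A * V₁ = A * V₂) : A * (W * V₁) = A * (W * V₂) := by
  obtain ⟨L, _, hL⟩ := hW
  have hA' : (0:H→L[ℂ]H) ≤ A := (ContinuousLinearMap.nonneg_iff_isPositive A).2 hA
  have hBB : CFC.sqrt A * CFC.sqrt A = A := CFC.sqrt_mul_sqrt_self A hA'
  have h0 : A * (V₁ - V₂) = 0 := by rw [mul_sub, h, sub_self]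
  have h1 : CFC.sqrt A * (V₁ - V₂) = 0 := sqrt_cancel hA h0
  have h2 : CFC.sqrt A * V₁ = CFC.sqrt A * V₂ := by
    rw [mul_sub, sub_eq_zero] at h1; exact h1
  have e : ∀ V : H →L[ℂ] H, A * (W * V)
      = CFC.sqrt A * (ContinuousLinearMap.adjoint L * (CFC.sqrt A * V)) := by
    intro V
    calc A * (W * V) = (CFC.sqrt A * CFC.sqrt A) * (W * V) := by rw [hBB]
    _ = CFC.sqrt A * ((CFC.sqrt A * W) * V) := by rw [mul_assoc, mul_assoc]
    _ = CFC.sqrt A * ((ContinuousLinearMap.adjoint L * CFC.sqrt A) * V) := by rw [hL]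
    _ = CFC.sqrt A * (ContinuousLinearMap.adjoint L * (CFC.sqrt A * V)) := by rw [mul_assoc]
  rw [e, e, h2]

lemma smul_one_mem (c : ℂ) : (c • (1 : H →L[ℂ] H)) ∈ M := by
  have : (c • (1 : H →L[ℂ] H)) ∈ M.toStarSubalgebra :=
    M.toStarSubalgebra.smul_mem (one_mem _) c
  exact this

lemma hhalf_mul {W₁ W₂ : H →L[ℂ] H} (h₁ : HasHalfAdjointIn M A W₁)
    (h₂ : HasHalfAdjointIn M A W₂) : HasHalfAdjointIn M A (W₁ * W₂) := by
  obtain ⟨L₁, hL₁, e₁⟩ := h₁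
  obtain ⟨L₂, hL₂, e₂⟩ := h₂
  refine ⟨L₂ * L₁, mul_mem hL₂ hL₁, ?_⟩
  rw [← ContinuousLinearMap.star_eq_adjoint, star_mul,
    ContinuousLinearMap.star_eq_adjoint, ContinuousLinearMap.star_eq_adjoint,
    ← mul_assoc, e₁, mul_assoc, e₂, mul_assoc]

lemma hhalf_smul (c : ℂ) {W : H →L[ℂ] H} (h : HasHalfAdjointIn M A W) :
    HasHalfAdjointIn M A (c • W) := by
  obtain ⟨L, hL, e⟩ := h
  refine ⟨(starRingEnd ℂ c) • L, M.toStarSubalgebra.smul_mem hL _, ?_⟩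
  rw [← ContinuousLinearMap.star_eq_adjoint, star_smul,
    ContinuousLinearMap.star_eq_adjoint, mul_smul_comm, e, smul_mul_assoc]
  simp

lemma hhalf_sub {W₁ W₂ : H →L[ℂ] H} (h₁ : HasHalfAdjointIn M A W₁)
    (h₂ : HasHalfAdjointIn M A W₂) : HasHalfAdjointIn M A (W₁ - W₂) := by
  obtain ⟨L₁, hL₁, e₁⟩ := h₁
  obtain ⟨L₂, hL₂, e₂⟩ := h₂
  refine ⟨L₁ - L₂, sub_mem hL₁ hL₂, ?_⟩
  rw [← ContinuousLinearMap.star_eq_adjoint, star_sub,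
    ContinuousLinearMap.star_eq_adjoint, ContinuousLinearMap.star_eq_adjoint,
    mul_sub, sub_mul, e₁, e₂]

lemma hhalf_one : HasHalfAdjointIn M A (1 : H →L[ℂ] H) := by
  refine ⟨1, one_mem _, ?_⟩
  rw [← ContinuousLinearMap.star_eq_adjoint, star_one, mul_one, one_mul]

lemma mem_MA_mul {W₁ W₂ : H →L[ℂ] H} (h₁ : W₁ ∈ MA M A) (h₂ : W₂ ∈ MA M A) :
    W₁ * W₂ ∈ MA M A :=
  ⟨mul_mem h₁.1 h₂.1, hhalf_mul h₁.2 h₂.2⟩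

lemma mem_MA_smul (c : ℂ) {W : H →L[ℂ] H} (h : W ∈ MA M A) : c • W ∈ MA M A :=
  ⟨M.toStarSubalgebra.smul_mem h.1 c, hhalf_smul c h.2⟩

lemma mem_MA_shift (lam : ℂ) {W : H →L[ℂ] H} (h : W ∈ MA M A) :
    lam • (1 : H →L[ℂ] H) - W ∈ MA M A :=
  ⟨sub_mem (smul_one_mem lam) h.1,
    hhalf_sub (hhalf_smul lam hhalf_one) h.2⟩


end Aux
/-- From a factorization `A(XY) = A(YX) = lam • (AZ)` and `A`-invertibility of `Z`,
get `A`-invertibility of `X`. -/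
lemma factor_inv (hA : A.IsPositive) {lam : ℂ} (hlam : lam ≠ 0)
    {X Y Z U : H →L[ℂ] H} (hXMA : X ∈ MA M A) (hYMA : Y ∈ MA M A) (hUMA : U ∈ MA M A)
    (idXY : A * (X * Y) = A * (lam • Z)) (idYX : A * (Y * X) = A * (lam • Z))
    (hZU : A * Z * U = A) (hUZ : A * U * Z = A) : AInvertible M A X := by
  set R : H →L[ℂ] H := lam⁻¹ • (Y * U) with hR
  set L' : H →L[ℂ] H := lam⁻¹ • (U * Y) with hL'
  have hRMA : R ∈ MA M A := mem_MA_smul _ (mem_MA_mul hYMA hUMA)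
  have hLMA : L' ∈ MA M A := mem_MA_smul _ (mem_MA_mul hUMA hYMA)
  have hXR : A * X * R = A := by
    have e1 : A * (X * (Y * U)) = lam • (A * Z * U) := by
      calc A * (X * (Y * U)) = (A * (X * Y)) * U := by
            simp only [mul_assoc]
      _ = (A * (lam • Z)) * U := by rw [idXY]
      _ = lam • (A * Z * U) := by
            simp only [mul_smul_comm, smul_mul_assoc]
    calc A * X * R = lam⁻¹ • (A * (X * (Y * U))) := by
          simp only [hR, mul_smul_comm, smul_mul_assoc, mul_assoc]
    _ = lam⁻¹ • (lam • (A * Z * U)) := by rw [e1]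
    _ = A := by rw [hZU, smul_smul, inv_mul_cancel₀ hlam, one_smul]
  have hLX : A * L' * X = A := by
    have e2 : A * (U * (Y * X)) = A * (U * (lam • Z)) := key hA hUMA.2 idYX
    calc A * L' * X = lam⁻¹ • (A * (U * (Y * X))) := by
          simp only [hL', mul_smul_comm, smul_mul_assoc, mul_assoc]
    _ = lam⁻¹ • (A * (U * (lam • Z))) := by rw [e2]
    _ = lam⁻¹ • (lam • (A * U * Z)) := by
          simp only [mul_smul_comm, smul_mul_assoc, mul_assoc]
    _ = A := by rw [hUZ, smul_smul, inv_mul_cancel₀ hlam, one_smul]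
  have hXR' : A * (X * R) = A * 1 := by rw [mul_one, ← mul_assoc]; exact hXR
  have hRL : A * R = A * L' := by
    have e3 : A * (L' * (X * R)) = A * (L' * 1) := key hA hLMA.2 hXR'
    have e4 : A * (L' * (X * R)) = A * R := by
      calc A * (L' * (X * R)) = (A * L' * X) * R := by simp only [mul_assoc]
      _ = A * R := by rw [hLX]
    rw [← e4, e3, mul_one]
  have hRX : A * R * X = A := by
    rw [hRL]; exact hLX
  exact ⟨R, hRMA, hXR, hRX⟩

lemma AInv_iff (hA : A.IsPositive) {S T : H →L[ℂ] H}
    (hS : S ∈ MA M A) (hT : T ∈ MA M A)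
    (hST : A * S * T = 0) (hTS : A * T * S = 0) {lam : ℂ} (hlam : lam ≠ 0) :
    (AInvertible M A (lam • (1:H →L[ℂ] H) - S) ∧ AInvertible M A (lam • (1:H →L[ℂ] H) - T))
      ↔ AInvertible M A (lam • (1:H →L[ℂ] H) - (S + T)) := by
  set X : H →L[ℂ] H := lam • (1:H →L[ℂ] H) - S with hX
  set Y : H →L[ℂ] H := lam • (1:H →L[ℂ] H) - T with hY
  set Z : H →L[ℂ] H := lam • (1:H →L[ℂ] H) - (S + T) with hZ
  have hXMA : X ∈ MA M A := mem_MA_shift lam hS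
  have hYMA : Y ∈ MA M A := mem_MA_shift lam hT
  have exy : X * Y = lam • Z + S * T := by
    simp only [hX, hY, hZ, mul_sub, sub_mul, smul_sub, smul_add, mul_smul_comm,
      smul_mul_assoc, mul_one, one_mul, smul_smul]
    module
  have eyx : Y * X = lam • Z + T * S := by
    simp only [hX, hY, hZ, mul_sub, sub_mul, smul_sub, smul_add, mul_smul_comm,
      smul_mul_assoc, mul_one, one_mul, smul_smul]
    module
  have idXY : A * (X * Y) = A * (lam • Z) := by
    rw [exy, mul_add, ← mul_assoc, hST, add_zero]
  have idYX : A * (Y * X) = A * (lam • Z) := by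
    rw [eyx, mul_add, ← mul_assoc, hTS, add_zero]
  constructor
  · rintro ⟨⟨S₁, hS₁, hXS₁, hS₁X⟩, ⟨S₂, hS₂, hYS₂, hS₂Y⟩⟩
    refine ⟨lam • (S₁ * S₂), mem_MA_smul _ (mem_MA_mul hS₁ hS₂), ?_, ?_⟩
    · -- A * Z * (lam • (S₁ * S₂)) = A
      have hXS₁' : A * (X * S₁) = A * 1 := by rw [mul_one, ← mul_assoc]; exact hXS₁
      have k1 : A * (Y * (X * S₁)) = A * (Y * 1) := key hA hYMA.2 hXS₁'
      calc A * Z * (lam • (S₁ * S₂)) = (A * (lam • Z)) * (S₁ * S₂) := by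
            simp only [mul_smul_comm, smul_mul_assoc, mul_assoc]
      _ = (A * (Y * X)) * (S₁ * S₂) := by rw [idYX]
      _ = (A * (Y * (X * S₁))) * S₂ := by simp only [mul_assoc]
      _ = (A * (Y * 1)) * S₂ := by rw [k1]
      _ = A * Y * S₂ := by rw [mul_one]
      _ = A := hYS₂
    · -- A * (lam • (S₁ * S₂)) * Z = A
      have k2 : A * (S₂ * (lam • Z)) = A * (S₂ * (Y * X)) := key hA hS₂.2 idYX.symm
      have k3 : A * (S₁ * (S₂ * (lam • Z))) = A * (S₁ * (S₂ * (Y * X))) :=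
        key hA hS₁.2 k2
      have hS₂Y' : A * (S₂ * Y) = A * 1 := by rw [mul_one, ← mul_assoc]; exact hS₂Y
      have k5 : A * (S₁ * (S₂ * Y)) = A * (S₁ * 1) := key hA hS₁.2 hS₂Y'
      calc A * (lam • (S₁ * S₂)) * Z = A * (S₁ * (S₂ * (lam • Z))) := by
            simp only [mul_smul_comm, smul_mul_assoc, mul_assoc]
      _ = A * (S₁ * (S₂ * (Y * X))) := k3
      _ = (A * (S₁ * (S₂ * Y))) * X := by simp only [mul_assoc]
      _ = (A * (S₁ * 1)) * X := by rw [k5]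
      _ = A * S₁ * X := by rw [mul_one]
      _ = A := hS₁X
  · rintro ⟨U, hU, hZU, hUZ⟩
    exact ⟨factor_inv hA hlam hXMA hYMA hU idXY idYX hZU hUZ,
      factor_inv hA hlam hYMA hXMA hU idYX idXY hZU hUZ⟩


end ASpec


open ASpec in
theorem stmt11 (M : VonNeumannAlgebra H) (A S T : H →L[ℂ] H) (hA : A.IsPositive)
    (hAM : A ∈ M) (hws : WellSupported A)
    (hS : S ∈ MA M A) (hT : T ∈ MA M A)
    (hST : A * S * T = 0) (hTS : A * T * S = 0) :
    ASpectrum M A (S + T) \ {0} = (ASpectrum M A S ∪ ASpectrum M A T) \ {0} := by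
  ext lam
  simp only [Set.mem_diff, Set.mem_singleton_iff, Set.mem_union, ASpectrum,
    Set.mem_setOf_eq]
  constructor
  · rintro ⟨h1, h2⟩
    have hiff := AInv_iff hA hS hT hST hTS h2
    exact ⟨by tauto, h2⟩
  · rintro ⟨h1, h2⟩
    have hiff := AInv_iff hA hS hT hST hTS h2
    exact ⟨by tauto, h2⟩
end
end

section
/- Let M be a von Neumann algebra and A ∈ M positive and well-supported. Then r_A(T) ≤ r(T) for every T ∈ M admitting an A^{1/2}-adjoint, where r_A is the A-spectral radius and r the ordinary spectral radius. -/
open scoped ComplexOrder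

set_option synthInstance.maxHeartbeats 1000000
set_option maxHeartbeats 1000000

noncomputable section

variable {H : Type*} [NormedAddCommGroup H] [InnerProductSpace ℂ H] [CompleteSpace H]

open scoped ContinuousFunctionalCalculus NNReal ENNReal

theorem mem_vna_of_commutes {M : VonNeumannAlgebra H} {x : H →L[ℂ] H}
    (hx : ∀ g ∈ Set.centralizer (M : Set (H →L[ℂ] H)), g * x = x * g) : x ∈ M := by
  rw [← SetLike.mem_coe, ← M.centralizer_centralizer]
  exact fun g hg => hx g hg

theorem commute_cfc_of_commute {a b : H →L[ℂ] H} (hsa : IsSelfAdjoint a)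
    (hab : b * a = a * b) (f : ℝ → ℝ) : b * cfc f a = cfc f a * b := by
  have key : ∀ φ : C(spectrum ℝ a, ℝ), b * cfcHom hsa φ = cfcHom hsa φ * b := by
    intro φ
    let Z : Subalgebra ℝ C(spectrum ℝ a, ℝ) :=
      (Subalgebra.centralizer ℝ {b}).comap ((cfcHom hsa (R := ℝ)).toAlgHom)
    have hZ : IsClosed (Z : Set C(spectrum ℝ a, ℝ)) := by
      have h1 : IsClosed {x : H →L[ℂ] H | b * x = x * b} :=
        isClosed_eq (continuous_mul_left b) (continuous_mul_right b)
      have h2 : (Z : Set C(spectrum ℝ a, ℝ)) =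
          (cfcHom hsa (R := ℝ)) ⁻¹' {x | b * x = x * b} := by
        ext ψ
        simp [Z, Subalgebra.mem_comap, Subalgebra.mem_centralizer_iff, Set.mem_centralizer_iff]
      rw [h2]
      exact h1.preimage (cfcHom_continuous hsa)
    have hpoly : polynomialFunctions (spectrum ℝ a) ≤ Z := by
      rw [polynomialFunctions.eq_adjoin_X]
      apply Algebra.adjoin_le
      rintro x hx
      rw [Set.mem_singleton_iff] at hx
      subst hx
      show _ ∈ Z
      rw [Subalgebra.mem_comap, Subalgebra.mem_centralizer_iff]
      intro m hm
      rw [Set.mem_singleton_iff] at hm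
      rw [hm]
      have hid : (Polynomial.toContinuousMapOnAlgHom (spectrum ℝ a) Polynomial.X)
          = (ContinuousMap.id ℝ).restrict (spectrum ℝ a) := by
        ext x; simp
      show b * cfcHom hsa _ = cfcHom hsa _ * b
      rw [hid, cfcHom_id hsa]
      exact hab
    have htop : (⊤ : Subalgebra ℝ C(spectrum ℝ a, ℝ)) ≤ Z := by
      rw [← polynomialFunctions.topologicalClosure (spectrum ℝ a)]
      exact Subalgebra.topologicalClosure_minimal hpoly hZ
    have hφ := htop (Algebra.mem_top : φ ∈ ⊤)
    rw [Subalgebra.mem_comap, Subalgebra.mem_centralizer_iff] at hφ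
    exact hφ b rfl
  exact cfc_cases (fun x => b * x = x * b) a f (by simp) fun hf hp => key _

theorem cfc_mem_vna {M : VonNeumannAlgebra H} {a : H →L[ℂ] H} (ha : IsSelfAdjoint a)
    (haM : a ∈ M) (f : ℝ → ℝ) : cfc f a ∈ M :=
  mem_vna_of_commutes fun g hg => commute_cfc_of_commute ha (hg a haM).symm f

theorem unit_inv_mem_vna {M : VonNeumannAlgebra H} (u : (H →L[ℂ] H)ˣ)
    (hu : (u : H →L[ℂ] H) ∈ M) : ((u⁻¹ : (H →L[ℂ] H)ˣ) : H →L[ℂ] H) ∈ M := by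
  apply mem_vna_of_commutes
  intro g hg
  have h := hg _ hu
  calc g * (↑u⁻¹ : H →L[ℂ] H)
      = ↑u⁻¹ * ↑u * g * ↑u⁻¹ := by rw [u.inv_mul, one_mul]
    _ = ↑u⁻¹ * (↑u * g) * ↑u⁻¹ := by rw [mul_assoc (↑u⁻¹ : H →L[ℂ] H)]
    _ = ↑u⁻¹ * (g * ↑u) * ↑u⁻¹ := by rw [h]
    _ = ↑u⁻¹ * g * (↑u * ↑u⁻¹) := by simp only [mul_assoc]
    _ = ↑u⁻¹ * g := by rw [u.mul_inv, mul_one]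

open ASpec in
theorem stmt12 (M : VonNeumannAlgebra H) (A T : H →L[ℂ] H) (hA : A.IsPositive)
    (hAM : A ∈ M) (hws : WellSupported A) (hT : T ∈ MA M A) :
    rA M A T ≤ sSup ((fun z : ℂ => ‖z‖) '' spectrum ℂ T) := by
  have hws' : IsClosed (spectrum ℂ A \ {0}) := hws
  obtain ⟨hTM, L, hLM, hL⟩ := hT
  rcases subsingleton_or_nontrivial H with hH | hH
  · haveI : Subsingleton (H →L[ℂ] H) :=
      ⟨fun X Y => ContinuousLinearMap.ext fun x => Subsingleton.elim _ _⟩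
    have hempty : ASpectrum M A T = ∅ := by
      ext lam
      simp only [ASpectrum, Set.mem_setOf_eq, Set.mem_empty_iff_false, iff_false, not_not]
      exact ⟨0, ⟨zero_mem _, ⟨0, zero_mem _, Subsingleton.elim _ _⟩⟩,
        Subsingleton.elim _ _, Subsingleton.elim _ _⟩
    have hspec : spectrum ℂ T = ∅ := by
      ext z
      simp [spectrum.mem_iff, isUnit_of_subsingleton]
    rw [rA, hempty, hspec]
  · haveI : Nontrivial (H →L[ℂ] H) := by
      obtain ⟨x, hx⟩ := exists_ne (0 : H)
      exact ⟨0, 1, fun h => hx (by simpa using (ContinuousLinearMap.ext_iff.mp h x).symm)⟩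
    have hspec_ne : (spectrum ℂ T).Nonempty := spectrum.nonempty T
    have hbdd : BddAbove ((fun z : ℂ => ‖z‖) '' spectrum ℂ T) :=
      ((spectrum.isCompact T).image continuous_norm).bddAbove
    have hR0 : 0 ≤ sSup ((fun z : ℂ => ‖z‖) '' spectrum ℂ T) := by
      obtain ⟨z, hz⟩ := hspec_ne
      exact le_trans (norm_nonneg z) (le_csSup hbdd ⟨z, hz, rfl⟩)
    apply Real.sSup_le _ hR0
    rintro r ⟨lam, hlam, rfl⟩
    by_contra hlt'
    push_neg at hlt'
    refine hlam ?_
    have hA' : (0 : H →L[ℂ] H) ≤ A := (ContinuousLinearMap.nonneg_iff_isPositive A).mpr hA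
    have hsa : IsSelfAdjoint A := hA.isSelfAdjoint
    -- ε such that the real spectrum of A lies in {0} ∪ [ε, ∞)
    have hKclosed : IsClosed (spectrum ℝ A \ {0}) := by
      have hset : spectrum ℝ A \ {0} = (fun x : ℝ => (x : ℂ)) ⁻¹' (spectrum ℂ A \ {0}) := by
        ext x
        simp only [Set.mem_diff, Set.mem_preimage, Set.mem_singleton_iff,
          Complex.ofReal_eq_zero]
        constructor
        · rintro ⟨h1, h2⟩
          refine ⟨?_, h2⟩
          have := (spectrum.algebraMap_mem_iff ℂ (R := ℝ) (a := A) (r := x)).mpr h1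
          simpa using this
        · rintro ⟨h1, h2⟩
          refine ⟨?_, h2⟩
          apply (spectrum.algebraMap_mem_iff ℂ (R := ℝ) (a := A) (r := x)).mp
          simpa using h1
      rw [hset]
      exact hws'.preimage Complex.continuous_ofReal
    have h0K : (0 : ℝ) ∈ (spectrum ℝ A \ {0})ᶜ := by simp
    obtain ⟨ε, hε, hball⟩ := Metric.isOpen_iff.mp hKclosed.isOpen_compl 0 h0K
    have hspecA : ∀ x ∈ spectrum ℝ A, x = 0 ∨ ε ≤ x := by
      intro x hx
      rcases eq_or_ne x 0 with h | h
      · exact Or.inl h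
      · right
        have hxK : x ∈ spectrum ℝ A \ {0} := ⟨hx, h⟩
        have hxball : x ∉ Metric.ball (0 : ℝ) ε := fun hb => (hball hb) hxK
        have habs : ε ≤ |x| := by
          rw [Metric.mem_ball, Real.dist_eq, sub_zero] at hxball
          exact not_lt.mp hxball
        have hx0 : 0 ≤ x := spectrum_nonneg_of_nonneg hA' hx
        rwa [abs_of_nonneg hx0] at habs
    set sqA := CFC.sqrt A with hsqA_def
    set g : ℝ → ℝ := fun x => min 1 (x / ε) * (Real.sqrt (max x ε))⁻¹ with hg_def
    have hg_cont : Continuous g := by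
      apply Continuous.mul
      · exact continuous_const.min (continuous_id.div_const ε)
      · apply Continuous.inv₀
        · exact Real.continuous_sqrt.comp (continuous_id.max continuous_const)
        · intro x
          exact ne_of_gt (Real.sqrt_pos.mpr (lt_of_lt_of_le hε (le_max_right x ε)))
    set f : ℝ → ℝ := fun x => g x * Real.sqrt x with hf_def
    have hf_cont : Continuous f := hg_cont.mul Real.continuous_sqrt
    have hg0 : g 0 = 0 := by
      simp [hg_def]
    have hf0 : f 0 = 0 := by simp [hf_def, hg0]
    have hfge : ∀ x : ℝ, ε ≤ x → f x = 1 := by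
      intro x hx
      have hx0 : 0 < x := lt_of_lt_of_le hε hx
      have h1 : min 1 (x / ε) = 1 := min_eq_left ((one_le_div hε).mpr hx)
      have h2 : max x ε = x := max_eq_left hx
      simp only [hf_def, hg_def, h1, h2, one_mul]
      exact inv_mul_cancel₀ (ne_of_gt (Real.sqrt_pos.mpr hx0))
    set P := cfc f A with hP_def
    set G := cfc g A with hG_def
    have hsqA_cfc : sqA = cfc Real.sqrt A := by
      rw [hsqA_def, CFC.sqrt_eq_cfc, cfc_nnreal_eq_real NNReal.sqrt A hA']
      exact cfc_congr fun x _ => by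
        rcases le_total x 0 with h | h
        · simp [h, Real.sqrt_eq_zero_of_nonpos h]
        · simp [h]
    have hGsq : G * sqA = P := by
      rw [hsqA_cfc, hG_def, hP_def,
        ← cfc_mul g Real.sqrt A hg_cont.continuousOn Real.continuous_sqrt.continuousOn]
    have hsqP : sqA * P = sqA := by
      rw [hsqA_cfc, hP_def,
        ← cfc_mul Real.sqrt f A Real.continuous_sqrt.continuousOn hf_cont.continuousOn]
      apply cfc_congr
      intro x hx
      rcases hspecA x hx with h | h
      · simp [h, hf0]
      · simp [hfge x h]
    have hPsq : P * sqA = sqA := by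
      rw [hsqA_cfc, hP_def,
        ← cfc_mul f Real.sqrt A hf_cont.continuousOn Real.continuous_sqrt.continuousOn]
      apply cfc_congr
      intro x hx
      rcases hspecA x hx with h | h
      · simp [h, hf0]
      · simp [hfge x h]
    have hPP : P * P = P := by
      rw [hP_def, ← cfc_mul f f A hf_cont.continuousOn hf_cont.continuousOn]
      apply cfc_congr
      intro x hx
      rcases hspecA x hx with h | h
      · simp [h, hf0]
      · simp [hfge x h]
    have hPnorm : ‖P‖ ≤ 1 := by
      rw [hP_def]
      apply norm_cfc_le zero_le_one
      intro x hx
      rcases hspecA x hx with h | h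
      · simp [h, hf0]
      · simp [hfge x h]
    have hsqAM : sqA ∈ M := hsqA_cfc ▸ cfc_mem_vna hsa hAM _
    have hPM : P ∈ M := cfc_mem_vna hsa hAM f
    have hGM : G ∈ M := cfc_mem_vna hsa hAM g
    -- P * T = P * T * P
    have hPT : P * T = P * T * P := by
      have h1 : P * T = G * (ContinuousLinearMap.adjoint L) * sqA := by
        rw [← hGsq, mul_assoc, hL, ← mul_assoc]
      calc P * T = G * (ContinuousLinearMap.adjoint L) * sqA := h1
        _ = G * (ContinuousLinearMap.adjoint L) * (sqA * P) := by rw [hsqP]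
        _ = (G * (ContinuousLinearMap.adjoint L) * sqA) * P := by simp only [mul_assoc]
        _ = P * T * P := by rw [← h1]
    set N := P * T * P with hN_def
    have hNM : N ∈ M := mul_mem (mul_mem hPM hTM) hPM
    have hNP : N * P = N := by rw [hN_def, mul_assoc (P * T) P P, hPP]
    have hPN : P * N = N := by
      rw [hN_def]
      calc P * (P * T * P) = (P * P) * T * P := by simp only [mul_assoc]
        _ = P * T * P := by rw [hPP]
    have hPTn : ∀ n : ℕ, P * T ^ n = N ^ n * P := by
      intro n
      induction n with
      | zero => simp
      | succ n ih =>
        calc P * T ^ (n + 1) = (P * T) * T ^ n := by rw [pow_succ', ← mul_assoc]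
          _ = (N * P) * T ^ n := by rw [hPT, hNP]
          _ = N * (P * T ^ n) := by rw [mul_assoc]
          _ = N * (N ^ n * P) := by rw [ih]
          _ = N ^ (n + 1) * P := by rw [← mul_assoc, ← pow_succ']
    have hNpow_norm : ∀ n : ℕ, ‖N ^ (n + 1)‖ ≤ ‖T ^ (n + 1)‖ := by
      intro n
      have h2 : N ^ (n + 1) * P = N ^ (n + 1) := by rw [pow_succ, mul_assoc, hNP]
      have h1 : N ^ (n + 1) = P * T ^ (n + 1) := by rw [hPTn (n + 1), h2]
      rw [h1]
      calc ‖P * T ^ (n + 1)‖ ≤ ‖P‖ * ‖T ^ (n + 1)‖ := norm_mul_le _ _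
        _ ≤ 1 * ‖T ^ (n + 1)‖ := mul_le_mul_of_nonneg_right hPnorm (norm_nonneg _)
        _ = ‖T ^ (n + 1)‖ := one_mul _
    -- spectral radius bound
    have habs_pos : 0 < ‖lam‖ := lt_of_le_of_lt hR0 hlt'
    have hrad : spectralRadius ℂ N < ‖lam‖₊ := by
      have h2 : ∀ n : ℕ,
          spectralRadius ℂ N ≤ (‖T ^ (n + 1)‖₊ : ℝ≥0∞) ^ (1 / (n + 1) : ℝ) := by
        intro n
        refine (spectrum.spectralRadius_le_pow_nnnorm_pow_one_div ℂ N n).trans ?_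
        rw [nnnorm_one, ENNReal.coe_one, ENNReal.one_rpow, mul_one]
        apply ENNReal.rpow_le_rpow _ (by positivity)
        exact_mod_cast hNpow_norm n
      have h3 : spectralRadius ℂ N ≤ spectralRadius ℂ T := by
        apply ge_of_tendsto (spectrum.pow_nnnorm_pow_one_div_tendsto_nhds_spectralRadius T)
        filter_upwards [Filter.eventually_gt_atTop 0] with n hn
        obtain ⟨m, rfl⟩ := Nat.exists_eq_succ_of_ne_zero hn.ne'
        have := h2 m
        convert this using 3
        · rfl
        · push_cast
          ring
      have h4 : spectralRadius ℂ T ≤ ENNReal.ofReal (sSup ((fun z : ℂ => ‖z‖) '' spectrum ℂ T)) := by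
        apply iSup₂_le
        intro k hk
        have hk' : ‖k‖ ≤ sSup ((fun z : ℂ => ‖z‖) '' spectrum ℂ T) :=
          le_csSup hbdd ⟨k, hk, rfl⟩
        calc (‖k‖₊ : ℝ≥0∞) = ENNReal.ofReal (‖k‖) := by
              rw [ofReal_norm, enorm_eq_nnnorm]
          _ ≤ ENNReal.ofReal (sSup ((fun z : ℂ => ‖z‖) '' spectrum ℂ T)) :=
              ENNReal.ofReal_le_ofReal hk'
      have h5 : ENNReal.ofReal (sSup ((fun z : ℂ => ‖z‖) '' spectrum ℂ T))
          < (‖lam‖₊ : ℝ≥0∞) := by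
        rw [← enorm_eq_nnnorm, ← ofReal_norm]
        exact (ENNReal.ofReal_lt_ofReal_iff habs_pos).mpr hlt'
      exact lt_of_le_of_lt (h3.trans h4) h5
    have hUnit : IsUnit (lam • (1 : H →L[ℂ] H) - N) := by
      have hres := spectrum.mem_resolventSet_of_spectralRadius_lt hrad
      rw [spectrum.mem_resolventSet_iff] at hres
      rwa [Algebra.algebraMap_eq_smul_one] at hres
    obtain ⟨u, hu⟩ := hUnit
    set Rv := ((u⁻¹ : (H →L[ℂ] H)ˣ) : H →L[ℂ] H) with hRv_def
    have hDRv : (lam • (1 : H →L[ℂ] H) - N) * Rv = 1 := by rw [← hu]; exact u.mul_inv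
    have hRvD : Rv * (lam • (1 : H →L[ℂ] H) - N) = 1 := by rw [← hu]; exact u.inv_mul
    have hDM : lam • (1 : H →L[ℂ] H) - N ∈ M := by
      have h1 : lam • (1 : H →L[ℂ] H) ∈ M := by
        rw [← Algebra.algebraMap_eq_smul_one]
        exact M.toStarSubalgebra.algebraMap_mem lam
      exact sub_mem h1 hNM
    have hRvM : Rv ∈ M := unit_inv_mem_vna u (hu ▸ hDM)
    have hPD : P * (lam • (1 : H →L[ℂ] H) - N) = (lam • (1 : H →L[ℂ] H) - N) * P := by
      rw [mul_sub, sub_mul, hPN, hNP, mul_smul_comm, smul_mul_assoc, mul_one, one_mul]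
    have hPRv : P * Rv = Rv * P := by
      calc P * Rv = 1 * (P * Rv) := (one_mul _).symm
        _ = (Rv * (lam • (1 : H →L[ℂ] H) - N)) * (P * Rv) := by rw [hRvD]
        _ = Rv * ((lam • (1 : H →L[ℂ] H) - N) * P * Rv) := by simp only [mul_assoc]
        _ = Rv * (P * (lam • (1 : H →L[ℂ] H) - N) * Rv) := by rw [← hPD]
        _ = (Rv * P) * ((lam • (1 : H →L[ℂ] H) - N) * Rv) := by simp only [mul_assoc]
        _ = (Rv * P) * 1 := by rw [hDRv]
        _ = Rv * P := mul_one _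
    set S := Rv * P with hS_def
    have hSM : S ∈ M := mul_mem hRvM hPM
    have hSP : S * P = S := by rw [hS_def, mul_assoc, hPP]
    have hhalf : HasHalfAdjointIn M A S := by
      refine ⟨ContinuousLinearMap.adjoint (sqA * S * G), ?_, ?_⟩
      · show ContinuousLinearMap.adjoint (sqA * S * G) ∈ M
        have : ContinuousLinearMap.adjoint (sqA * S * G) = star (sqA * S * G) := rfl
        rw [this]
        exact star_mem (mul_mem (mul_mem hsqAM hSM) hGM)
      · rw [ContinuousLinearMap.adjoint_adjoint]
        calc sqA * S = sqA * (S * P) := by rw [hSP]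
          _ = sqA * (S * (G * sqA)) := by rw [hGsq]
          _ = sqA * S * G * sqA := by simp only [mul_assoc]
    have hA_eq : A = sqA * sqA := (CFC.sqrt_mul_sqrt_self A hA').symm
    have hAP : A * P = A := by rw [hA_eq, mul_assoc, hsqP]
    have hPT2 : P * (lam • (1 : H →L[ℂ] H) - T) = (lam • (1 : H →L[ℂ] H) - N) * P := by
      rw [mul_sub, sub_mul, hPT, hNP, mul_smul_comm, smul_mul_assoc, mul_one, one_mul]
    refine ⟨S, ⟨hSM, hhalf⟩, ?_, ?_⟩
    · calc A * (lam • (1 : H →L[ℂ] H) - T) * S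
          = (A * P) * (lam • (1 : H →L[ℂ] H) - T) * (Rv * P) := by rw [hAP, hS_def]
        _ = A * (P * (lam • (1 : H →L[ℂ] H) - T)) * (Rv * P) := by simp only [mul_assoc]
        _ = A * ((lam • (1 : H →L[ℂ] H) - N) * P) * (Rv * P) := by rw [hPT2]
        _ = A * ((lam • (1 : H →L[ℂ] H) - N) * (P * Rv * P)) := by simp only [mul_assoc]
        _ = A * ((lam • (1 : H →L[ℂ] H) - N) * (Rv * P * P)) := by rw [hPRv]
        _ = A * ((lam • (1 : H →L[ℂ] H) - N) * Rv * (P * P)) := by simp only [mul_assoc]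
        _ = A * (1 * P) := by rw [hDRv, hPP]
        _ = A := by rw [one_mul, hAP]
    · calc A * S * (lam • (1 : H →L[ℂ] H) - T)
          = A * Rv * (P * (lam • (1 : H →L[ℂ] H) - T)) := by rw [hS_def]; simp only [mul_assoc]
        _ = A * Rv * ((lam • (1 : H →L[ℂ] H) - N) * P) := by rw [hPT2]
        _ = A * (Rv * (lam • (1 : H →L[ℂ] H) - N)) * P := by simp only [mul_assoc]
        _ = A * 1 * P := by rw [hRvD]
        _ = A := by rw [mul_one, hAP]
end
end

section
/- Let M be a von Neumann algebra, A ∈ M positive and well-supported, P its range projection, and suppose M^A = M (every element of M admits an A^{1/2}-adjoint). Then P lies in the center of M. -/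
open scoped ComplexOrder

set_option synthInstance.maxHeartbeats 1000000
set_option maxHeartbeats 1000000

noncomputable section

variable {H : Type*} [NormedAddCommGroup H] [InnerProductSpace ℂ H] [CompleteSpace H]

open ASpec in
theorem stmt13 (M : VonNeumannAlgebra H) (A P : H →L[ℂ] H) (hA : A.IsPositive)
    (hAM : A ∈ M) (hws : WellSupported A)
    (hP : IsRangeProjection A P) (hPM : P ∈ M)
    (hall : ∀ T ∈ M, HasHalfAdjointIn M A T) :
    ∀ Y ∈ M, P * Y = Y * P := by
  
  classical
  -- Notation
  set S : H →L[ℂ] H := CFC.sqrt A with hSdef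
  have hA0 : (0 : H →L[ℂ] H) ≤ A := (ContinuousLinearMap.nonneg_iff_isPositive A).mpr hA
  have hS0 : (0 : H →L[ℂ] H) ≤ S := CFC.sqrt_nonneg A
  have hSsa : IsSelfAdjoint S := IsSelfAdjoint.of_nonneg hS0
  have hAsa : IsSelfAdjoint A := hA.isSelfAdjoint
  have hSS : S * S = A := by
    have := CFC.sq_sqrt A hA0
    rwa [pow_two] at this
  -- (range T)ᗮ = ker T for selfadjoint T
  have horth : ∀ (T : H →L[ℂ] H), IsSelfAdjoint T →
      (LinearMap.range (T : H →ₗ[ℂ] H))ᗮ = LinearMap.ker (T : H →ₗ[ℂ] H) := by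
    intro T hT
    have hadj : ∀ x y : H, (inner ℂ (T x) y : ℂ) = inner ℂ x (T y) := by
      intro x y
      have := ContinuousLinearMap.adjoint_inner_left T y x
      rwa [hT.adjoint_eq] at this
    ext x
    simp only [Submodule.mem_orthogonal, LinearMap.mem_ker, LinearMap.mem_range,
      ContinuousLinearMap.coe_coe, forall_exists_index]
    constructor
    · intro h
      have h1 : (inner ℂ (T x) (T x) : ℂ) = 0 := by
        have := h (T x) x rfl
        have h2 : (inner ℂ (T x) x : ℂ) = inner ℂ x (T x) := hadj x x ▸ rfl
        -- use adjointness: ⟪T x, T x⟫ = ⟪x, T (T x)⟫ ... simpler: ⟪T y, x⟫ = 0 for y := T x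
        calc (inner ℂ (T x) (T x) : ℂ) = inner ℂ (T (T x)) x := (hadj (T x) x).symm
          _ = 0 := h (T (T x)) (T x) rfl
      exact inner_self_eq_zero.mp h1
    · intro h u y hy
      subst hy
      rw [hadj y x, h, inner_zero_right]
  -- closure of range of selfadjoint T equals (ker T)ᗮ
  have hclos : ∀ (T : H →L[ℂ] H), IsSelfAdjoint T →
      (LinearMap.range (T : H →ₗ[ℂ] H)).topologicalClosure
        = (LinearMap.ker (T : H →ₗ[ℂ] H))ᗮ := by
    intro T hT
    rw [← horth T hT, Submodule.orthogonal_orthogonal_eq_closure]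
  -- ker S = ker A
  have hker : LinearMap.ker (S : H →ₗ[ℂ] H) = LinearMap.ker (A : H →ₗ[ℂ] H) := by
    have hSadj : ∀ x y : H, (inner ℂ (S x) y : ℂ) = inner ℂ x (S y) := by
      intro x y
      have := ContinuousLinearMap.adjoint_inner_left S y x
      rwa [hSsa.adjoint_eq] at this
    ext x
    simp only [LinearMap.mem_ker, ContinuousLinearMap.coe_coe]
    constructor
    · intro h
      have : A x = S (S x) := by
        rw [← hSS]; rfl
      rw [this, h, map_zero]
    · intro h
      have h1 : (inner ℂ (S x) (S x) : ℂ) = 0 := by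
        calc (inner ℂ (S x) (S x) : ℂ) = inner ℂ x (S (S x)) := hSadj x (S x)
          _ = inner ℂ x (A x) := by rw [show S (S x) = A x from by rw [← hSS]; rfl]
          _ = 0 := by rw [h, inner_zero_right]
      exact inner_self_eq_zero.mp h1
  -- closure range S = closure range A
  have hclosSA : (LinearMap.range (S : H →ₗ[ℂ] H)).topologicalClosure
      = (LinearMap.range (A : H →ₗ[ℂ] H)).topologicalClosure := by
    rw [hclos S hSsa, hclos A hAsa, hker]
  set K := (LinearMap.range (A : H →ₗ[ℂ] H)).topologicalClosure with hKdef
  have hPrange : LinearMap.range (P : H →ₗ[ℂ] H) = K := hP.2.2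
  -- P fixes elements of K
  have hPfix : ∀ y ∈ K, P y = y := by
    intro y hy
    rw [← hPrange] at hy
    obtain ⟨z, rfl⟩ := hy
    show P (P z) = P z
    have := congrArg (fun T : H →L[ℂ] H => T z) hP.2.1
    exact this
  -- main invariance: every Z ∈ M maps K into K
  have hinv : ∀ Z ∈ M, ∀ x ∈ K, Z x ∈ K := by
    intro Z hZ x hx
    obtain ⟨L, hL, heq⟩ := hall (star Z) (star_mem hZ)
    -- take star of heq : S * star Z = adjoint L * S
    have heq' : Z * S = S * L := by
      have := congrArg star heq
      simp only [star_mul, star_star] at this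
      rw [hSsa.star_eq] at this
      rwa [show star (ContinuousLinearMap.adjoint L) = L from star_star L] at this
    -- Z maps range S into range S
    have hmaps : Set.MapsTo Z (LinearMap.range (S : H →ₗ[ℂ] H) : Set H)
        (LinearMap.range (S : H →ₗ[ℂ] H) : Set H) := by
      rintro _ ⟨h, rfl⟩
      refine ⟨L h, ?_⟩
      have := congrArg (fun T : H →L[ℂ] H => T h) heq'
      exact this.symm
    -- x ∈ closure of range S
    have hxS : x ∈ closure ((LinearMap.range (S : H →ₗ[ℂ] H) : Set H)) := by
      have : x ∈ (LinearMap.range (S : H →ₗ[ℂ] H)).topologicalClosure := hclosSA ▸ hx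
      exact this
    have : Z x ∈ closure ((LinearMap.range (S : H →ₗ[ℂ] H) : Set H)) :=
      map_mem_closure Z.continuous hxS hmaps
    have : Z x ∈ (LinearMap.range (S : H →ₗ[ℂ] H)).topologicalClosure := this
    rwa [hclosSA] at this
  -- P * Z * P = Z * P for Z ∈ M
  have hone : ∀ Z ∈ M, P * Z * P = Z * P := by
    intro Z hZ
    ext x
    show P (Z (P x)) = Z (P x)
    apply hPfix
    apply hinv Z hZ
    rw [← hPrange]
    exact ⟨x, rfl⟩
  intro Y hY
  have h1 : P * Y * P = Y * P := hone Y hY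
  have h2 : P * star Y * P = star Y * P := hone (star Y) (star_mem hY)
  have hPsa : star P = P := hP.1
  have h3 : P * Y * P = P * Y := by
    have := congrArg star h2
    simp only [star_mul, star_star, hPsa] at this
    rw [← mul_assoc] at this
    exact this
  rw [← h3, h1]
end
end
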